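/- arXiv:0906.5096 — 5 statements merged into one kernel-verified Lean document; each statement's English description precedes it below -/
import Mathlib

section
/- Wick's theorem / quadratic Grassmann–Plücker relation for Pfaffians: let z be a skew-symmetric n×n matrix over a commutative ring, and for each even subset B ⊆ [n] let Pf_B(z) be the Pfaffian of the principal submatrix indexed by B. For any subsets σ = {σ_1 < … < σ_r} and τ = {τ_1 < … < τ_s} of [n] with r, s odd, one has Σ_{i=1}^{s} (−1)^i Pf_{{τ_i}∪σ}(z) · Pf_{τ∖{τ_i}}(z) + Σ_{j=1}^{r} (−1)^j Pf_{σ∖{σ_j}}(z) · Pf_{{σ_j}∪τ}(z) = 0 (with appropriate sign conventions for reordering the index sets). -/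
open Finset Matrix

/-- The "successor" of an index in `Fin m` (wrapping around; only used where it does not wrap). -/
def finSucc {m : ℕ} (i : Fin m) : Fin m := ⟨(i.val + 1) % m, Nat.mod_lt _ i.pos⟩

/-- The Pfaffian of an `m × m` matrix, defined as a sum over canonical representatives of
perfect matchings of `{0, …, m-1}` (for odd `m` there are none and the value is `0`;
for `m = 0` it is `1`). -/
def pf {R : Type*} [CommRing R] {m : ℕ} (M : Matrix (Fin m) (Fin m) R) : R :=
  ∑ σ ∈ Finset.univ.filter (fun σ : Equiv.Perm (Fin m) =>
      (∀ i : Fin m, i.val % 2 = 0 → σ i < σ (finSucc i)) ∧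
      (∀ i j : Fin m, i.val % 2 = 0 → j.val % 2 = 0 → i < j → σ i < σ j)),
    (Equiv.Perm.sign σ : ℤ) •
      ∏ i ∈ Finset.univ.filter (fun i : Fin m => i.val % 2 = 0), M (σ i) (σ (finSucc i))

/-- The Pfaffian of the principal submatrix of `M` with rows and columns indexed by `B`
(listed in increasing order). -/
def pfB {R : Type*} [CommRing R] {n : ℕ} (M : Matrix (Fin n) (Fin n) R)
    (B : Finset (Fin n)) : R :=
  pf (M.submatrix (B.orderEmbOfFin rfl) (B.orderEmbOfFin rfl))

/-- The sign `(-1)^{#{x ∈ S : x < a}}` incurred by moving `a` from the front of the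
index sequence `a, s_1, …, s_r` into its sorted position within `{a} ∪ S`. -/
def insSign {R : Type*} [CommRing R] {n : ℕ} (a : Fin n) (S : Finset (Fin n)) : R :=
  (-1 : R) ^ (S.filter (fun x => x < a)).card

/-!
Expanding along the first row, `Pf(a, s₁, …, s_r) = Σ_j (-1)^(j-1) z_{a s_j} Pf(s ∖ s_j)`, turns
each of the two sums into the double sum `Σ_{i,j} ± z_{τ_i σ_j} Pf(σ ∖ σ_j) Pf(τ ∖ τ_i)`, the two
with opposite signs by skew-symmetry, so they cancel. The reordering sign `insSign a S` is what it
costs to move `a` from the front of `a, s₁, …, s_r` to its sorted place, because the Pfaffian of a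
list of indices, defined by first-row expansion, is alternating.
-/

section FirstRowExpansion

open Equiv Equiv.Perm

variable {m : ℕ} {R : Type*} [CommRing R]

def canon (m : ℕ) : Finset (Perm (Fin m)) :=
  Finset.univ.filter (fun σ : Perm (Fin m) =>
      (∀ i : Fin m, i.val % 2 = 0 → σ i < σ (finSucc i)) ∧
      (∀ i j : Fin m, i.val % 2 = 0 → j.val % 2 = 0 → i < j → σ i < σ j))

def evens (m : ℕ) : Finset (Fin m) := Finset.univ.filter (fun i : Fin m => i.val % 2 = 0)

lemma pf_def (M : Matrix (Fin m) (Fin m) R) :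
    pf M = ∑ σ ∈ canon m, (sign σ : ℤ) • ∏ i ∈ evens m, M (σ i) (σ (finSucc i)) := rfl

lemma mem_canon (σ : Perm (Fin m)) :
    σ ∈ canon m ↔ (∀ i : Fin m, i.val % 2 = 0 → σ i < σ (finSucc i)) ∧
      (∀ i j : Fin m, i.val % 2 = 0 → j.val % 2 = 0 → i < j → σ i < σ j) := by
  simp [canon]

lemma finSucc_of_lt (i : Fin m) (h : i.val + 1 < m) : finSucc i = ⟨i.val + 1, h⟩ := by
  simp [finSucc, Nat.mod_eq_of_lt h]

lemma pf_fin_zero (M : Matrix (Fin 0) (Fin 0) R) : pf M = 1 := by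
  have h : canon 0 = {1} :=
    Finset.eq_singleton_iff_unique_mem.mpr
      ⟨(mem_canon 1).mpr ⟨fun i => i.elim0, fun i => i.elim0⟩,
        fun σ _ => Equiv.ext fun i => i.elim0⟩
  simp [pf_def, h, evens]

/-- The increasing enumeration of `Fin (m + 2) ∖ {0, k + 1}`. -/
def pairCompl (k : Fin (m + 1)) (i : Fin m) : Fin (m + 2) := (k.succAbove i).succ

lemma pairCompl_strictMono (k : Fin (m + 1)) : StrictMono (pairCompl k) :=
  Fin.strictMono_succ.comp (Fin.strictMono_succAbove k)

/-- The permutation matching `0` with `k + 1` and the remaining indices as `σ'` does, after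
relabelling by `pairCompl k`. -/
def pairPerm (k : Fin (m + 1)) (σ' : Perm (Fin m)) : Perm (Fin (m + 2)) :=
  decomposeFin.symm (0, k.cycleRange.symm * decomposeFin.symm (0, σ'))

@[simp] lemma pairPerm_zero (k : Fin (m + 1)) (σ' : Perm (Fin m)) : pairPerm k σ' 0 = 0 := by
  simp [pairPerm, decomposeFin_symm_apply_zero]

@[simp] lemma pairPerm_one (k : Fin (m + 1)) (σ' : Perm (Fin m)) : pairPerm k σ' 1 = k.succ := by
  rw [← Fin.succ_zero_eq_one, pairPerm, decomposeFin_symm_apply_succ]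
  simp [decomposeFin_symm_apply_zero]

@[simp] lemma pairPerm_succ_succ (k : Fin (m + 1)) (σ' : Perm (Fin m)) (i : Fin m) :
    pairPerm k σ' i.succ.succ = pairCompl k (σ' i) := by
  simp [pairPerm, pairCompl, decomposeFin_symm_apply_succ]

lemma sign_pairPerm (k : Fin (m + 1)) (σ' : Perm (Fin m)) :
    sign (pairPerm k σ') = (-1) ^ (k : ℕ) * sign σ' := by
  simp [pairPerm, decomposeFin.symm_sign, Fin.sign_cycleRange]

lemma finSucc_succ_succ (j : Fin m) (h : j.val + 1 < m) :
    finSucc j.succ.succ = (finSucc j).succ.succ := by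
  rw [finSucc_of_lt _ h, finSucc_of_lt _ (by simp; omega)]
  rfl

lemma val_succ_succ_mod_two (j : Fin m) : (j.succ.succ : Fin (m + 2)).val % 2 = j.val % 2 := by
  simp; omega

lemma mem_canon_of_mem_canon_add_two (hm : Even m) {τ : Perm (Fin (m + 2))}
    {σ' : Perm (Fin m)} {g : Fin m → Fin (m + 2)} (hg : StrictMono g)
    (hτ : ∀ i, τ i.succ.succ = g (σ' i)) (hτc : τ ∈ canon (m + 2)) : σ' ∈ canon m := by
  obtain ⟨h1, h2⟩ := (mem_canon τ).mp hτc
  refine (mem_canon σ').mpr ⟨fun j hj => ?_, fun i j hi hj hij => ?_⟩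
  · have := h1 j.succ.succ ((val_succ_succ_mod_two j).trans hj)
    rwa [finSucc_succ_succ j (by grind), hτ, hτ, hg.lt_iff_lt] at this
  · have := h2 i.succ.succ j.succ.succ ((val_succ_succ_mod_two i).trans hi)
      ((val_succ_succ_mod_two j).trans hj) (by simpa using hij)
    rwa [hτ, hτ, hg.lt_iff_lt] at this

lemma mem_canon_add_two_of_mem_canon (hm : Even m) {τ : Perm (Fin (m + 2))}
    {σ' : Perm (Fin m)} {g : Fin m → Fin (m + 2)} (hg : StrictMono g) (h0 : τ 0 = 0)
    (hτ : ∀ i, τ i.succ.succ = g (σ' i)) (hσ' : σ' ∈ canon m) : τ ∈ canon (m + 2) := by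
  obtain ⟨h1, h2⟩ := (mem_canon σ').mp hσ'
  have hpos : ∀ i, i ≠ 0 → 0 < τ i := fun i hi =>
    Fin.pos_iff_ne_zero.mpr fun h => hi (τ.injective (h.trans h0.symm))
  refine (mem_canon τ).mpr ⟨fun i hi => ?_, fun i j hi hj hij => ?_⟩
  · cases i using Fin.cases with
    | zero =>
      rw [h0]
      exact hpos _ fun h => by simp [finSucc] at h
    | succ i =>
      cases i using Fin.cases with
      | zero => simp at hi
      | succ i =>
        rw [val_succ_succ_mod_two] at hi
        rw [finSucc_succ_succ i (by grind), hτ, hτ, hg.lt_iff_lt]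
        exact h1 i hi
  · cases i using Fin.cases with
    | zero => rw [h0]; exact hpos _ (ne_of_gt hij)
    | succ i =>
      cases i using Fin.cases with
      | zero => simp at hi
      | succ i =>
        cases j using Fin.cases with
        | zero => exact absurd hij (Fin.not_lt_zero _)
        | succ j =>
          cases j using Fin.cases with
          | zero => simp [Fin.lt_def] at hij
          | succ j =>
            rw [val_succ_succ_mod_two] at hi hj
            rw [hτ, hτ, hg.lt_iff_lt]
            exact h2 i j hi hj (by simpa using hij)

lemma apply_zero_of_mem_canon {σ : Perm (Fin (m + 1))} (hσ : σ ∈ canon (m + 1)) : σ 0 = 0 := by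
  obtain ⟨h1, h2⟩ := (mem_canon σ).mp hσ
  by_contra hne
  set t := σ.symm 0
  have hσt : σ t = 0 := σ.apply_symm_apply 0
  have ht0 : t ≠ 0 := fun h => hne (h ▸ hσt)
  rcases Nat.mod_two_eq_zero_or_one t.val with he | ho
  · exact Fin.not_lt_zero _ (hσt ▸ h2 0 t rfl he (Fin.pos_iff_ne_zero.mpr ht0))
  · have hlt : t.val - 1 + 1 < m + 1 := by omega
    have hprev : finSucc ⟨t.val - 1, by omega⟩ = t := by
      rw [finSucc_of_lt _ hlt]; ext; simp; omega
    exact Fin.not_lt_zero _ (hσt ▸ hprev ▸ h1 ⟨t.val - 1, by omega⟩ (by simp; omega))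

lemma pairPerm_injective :
    Function.Injective (fun p : Fin (m + 1) × Perm (Fin m) => pairPerm p.1 p.2) := by
  rintro ⟨k, σ'⟩ ⟨k', τ'⟩ h
  have h := Prod.ext_iff.mp (decomposeFin.symm.injective h)
  have hk : k = k' := by simpa [decomposeFin_symm_apply_zero] using congrArg (· 0) h.2
  subst hk
  simpa using decomposeFin.symm.injective (mul_left_cancel h.2)

lemma exists_pairPerm_eq {τ : Perm (Fin (m + 2))} (h0 : τ 0 = 0) :
    ∃ k σ', pairPerm k σ' = τ := by
  obtain ⟨⟨p, e⟩, rfl⟩ := decomposeFin.symm.surjective τ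
  obtain rfl : p = 0 := by simpa [decomposeFin_symm_apply_zero] using h0
  obtain ⟨⟨p', σ'⟩, he⟩ := decomposeFin.symm.surjective ((e 0).cycleRange * e)
  obtain rfl : p' = 0 := by simpa [decomposeFin_symm_apply_zero] using congrArg (· 0) he
  refine ⟨e 0, σ', ?_⟩
  rw [pairPerm, he, ← mul_assoc, ← Perm.inv_def, inv_mul_cancel, one_mul]

lemma prod_evens_succ_succ (hm : Even m) (f : Fin (m + 2) → Fin (m + 2) → R) :
    ∏ i ∈ evens (m + 2), f i (finSucc i) =
      f 0 1 * ∏ i ∈ evens m, f i.succ.succ (finSucc i).succ.succ := by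
  have hm2 : m % 2 = 0 := Nat.even_iff.mp hm
  have h01 : finSucc (0 : Fin (m + 2)) = 1 := by ext; simp [finSucc]
  simp only [evens, Finset.prod_filter, Fin.prod_univ_succ (n := m + 1),
    Fin.prod_univ_succ (n := m)]
  refine congrArg₂ _ (by simp [h01]) ?_
  rw [if_neg (by simp), one_mul]
  refine Finset.prod_congr rfl fun i _ => ?_
  rw [val_succ_succ_mod_two]
  split_ifs with hi
  · rw [finSucc_succ_succ i (by omega)]
  · rfl

lemma mem_canon_pairPerm_iff (hm : Even m) (k : Fin (m + 1)) (σ' : Perm (Fin m)) :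
    pairPerm k σ' ∈ canon (m + 2) ↔ σ' ∈ canon m :=
  ⟨mem_canon_of_mem_canon_add_two hm (pairCompl_strictMono k) (pairPerm_succ_succ k σ'),
    mem_canon_add_two_of_mem_canon hm (pairCompl_strictMono k) (pairPerm_zero k σ')
      (pairPerm_succ_succ k σ')⟩

lemma pf_eq_sum_first_row (hm : Even m) (M : Matrix (Fin (m + 2)) (Fin (m + 2)) R) :
    pf M = ∑ k : Fin (m + 1),
      (-1) ^ (k : ℕ) * M 0 k.succ * pf (M.submatrix (pairCompl k) (pairCompl k)) := by
  simp only [pf_def, Finset.mul_sum, ← Finset.sum_product']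
  symm
  refine Finset.sum_nbij (fun p => pairPerm p.1 p.2) (fun p hp => ?_)
    (pairPerm_injective.injOn) (fun τ hτ => ?_) (fun p _ => ?_)
  · exact (mem_canon_pairPerm_iff hm p.1 p.2).mpr (Finset.mem_product.mp hp).2
  · obtain ⟨k, σ', rfl⟩ := exists_pairPerm_eq (apply_zero_of_mem_canon hτ)
    exact ⟨(k, σ'), Finset.mem_product.mpr ⟨Finset.mem_univ _,
      (mem_canon_pairPerm_iff hm k σ').mp hτ⟩, rfl⟩
  · obtain ⟨k, σ'⟩ := p
    rw [prod_evens_succ_succ hm (fun i j => M (pairPerm k σ' i) (pairPerm k σ' j))]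
    simp only [zsmul_eq_mul, pairPerm_zero, pairPerm_one, pairPerm_succ_succ, sign_pairPerm,
      Matrix.submatrix_apply]
    push_cast
    ring

end FirstRowExpansion

section ListPfaffian

variable {α R : Type*} [CommRing R] (z : Matrix α α R)

/-- The Pfaffian of `z` on the rows and columns listed, in this order, in `l`. -/
def pfList : List α → R
  | [] => 1
  | a :: l => ∑ k : Fin l.length, (-1 : R) ^ (k : ℕ) * z a l[k] * pfList (l.eraseIdx k)
termination_by l => l.length
decreasing_by
  simp only [List.length_eraseIdx, List.length_cons]
  split <;> omega

@[simp] lemma pfList_nil : pfList z [] = 1 := by simp [pfList]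

lemma pfList_cons (a : α) (l : List α) :
    pfList z (a :: l) =
      ∑ k : Fin l.length, (-1 : R) ^ (k : ℕ) * z a l[k] * pfList z (l.eraseIdx k) := by
  rw [pfList]

lemma pfList_cons_eq_sum_range (a : α) (l : List α) :
    pfList z (a :: l) = ∑ k ∈ Finset.range l.length,
      (-1 : R) ^ k * z a (l.getD k a) * pfList z (l.eraseIdx k) := by
  rw [pfList_cons, ← Fin.sum_univ_eq_sum_range]
  simp

lemma val_succAbove {m : ℕ} (p : Fin (m + 1)) (i : Fin m) :
    (p.succAbove i : ℕ) = if i.val < p.val then i.val else i.val + 1 := by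
  unfold Fin.succAbove
  split_ifs <;> simp_all [Fin.lt_def]

lemma eraseIdx_eraseIdx_of_le (l : List α) {k j : ℕ} (h : k ≤ j) :
    (l.eraseIdx k).eraseIdx j = (l.eraseIdx (j + 1)).eraseIdx k := by
  induction l generalizing k j with
  | nil => simp
  | cons a l ih =>
    cases k with
    | zero => cases j <;> simp [List.eraseIdx_cons_succ]
    | succ k =>
      cases j with
      | zero => omega
      | succ j => simp only [List.eraseIdx_cons_succ, ih (Nat.le_of_succ_le_succ h)]

def eraseTwo (l : List α) (k v : ℕ) : List α := (l.eraseIdx (max k v)).eraseIdx (min k v)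

lemma eraseTwo_comm (l : List α) (k v : ℕ) : eraseTwo l k v = eraseTwo l v k := by
  simp [eraseTwo, max_comm, min_comm]

lemma eraseIdx_eraseIdx_succAbove {m : ℕ} (l : List α) (k : Fin (m + 1)) (j : Fin m) :
    (l.eraseIdx k).eraseIdx j = eraseTwo l k (k.succAbove j) := by
  rw [eraseTwo, val_succAbove]
  split_ifs with h
  · rw [max_eq_left h.le, min_eq_right h.le]
  · rw [max_eq_right (by omega), min_eq_left (by omega), eraseIdx_eraseIdx_of_le l (not_lt.mp h)]

lemma getElem_eraseIdx_succAbove {m : ℕ} (l : List α) (hl : l.length = m + 1) (k : Fin (m + 1))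
    (j : Fin m) :
    (l.eraseIdx k)[(j : ℕ)]'(by rw [List.length_eraseIdx_of_lt (by omega)]; omega) =
      l[(k.succAbove j : ℕ)]'(by rw [hl]; exact (k.succAbove j).isLt) := by
  rw [List.getElem_eraseIdx]
  split_ifs with h <;> simp only [val_succAbove, h, if_true, if_false]

/-- The sign of `z x l[k] * z y l[v]` in the expansion of `pfList z (x :: y :: l)`. -/
def pairSign (R : Type*) [CommRing R] (k v : ℕ) : R :=
  if v < k then (-1) ^ (k + v + 1) else (-1) ^ (k + v)

lemma pairSign_swap {k v : ℕ} (h : k ≠ v) : pairSign R v k = - pairSign R k v := by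
  rcases h.lt_or_gt with h' | h' <;>
    simp [pairSign, h', h'.not_gt, pow_succ, add_comm v k]

lemma neg_one_pow_mul_neg_one_pow_succAbove {m : ℕ} (k : Fin (m + 1)) (j : Fin m) :
    (-1 : R) ^ (j : ℕ) * -(-1) ^ (k : ℕ) = pairSign R k (k.succAbove j) := by
  rw [pairSign, val_succAbove]
  split_ifs <;> first | omega | ring

lemma sum_eraseIdx_eq_sum_succAbove {m : ℕ} (l : List α) (hl : l.length = m + 1) (k : Fin (m + 1))
    (f : ℕ → α → List α → R) :
    ∑ j : Fin (l.eraseIdx k).length, f j (l.eraseIdx k)[j] ((l.eraseIdx k).eraseIdx j) =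
      ∑ j : Fin m, f j (l[(k.succAbove j : ℕ)]'(by rw [hl]; exact (k.succAbove j).isLt))
        (eraseTwo l k (k.succAbove j)) := by
  have hlen : m = (l.eraseIdx k).length := by rw [List.length_eraseIdx_of_lt (by omega)]; omega
  rw [← Fin.sum_congr' _ hlen]
  refine Finset.sum_congr rfl fun j _ => ?_
  simp only [Fin.getElem_fin, Fin.val_cast]
  rw [getElem_eraseIdx_succAbove l hl, eraseIdx_eraseIdx_succAbove]

lemma pfList_cons_cons (x y : α) (l : List α) :
    pfList z (x :: y :: l) = z x y * pfList z l +
      ∑ k : Fin l.length, ∑ v ∈ Finset.univ.erase k,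
        pairSign R k v * (z x l[k] * z y l[v]) * pfList z (eraseTwo l k v) := by
  obtain _ | ⟨c, l'⟩ := l
  · simp [pfList_cons]
  rw [pfList_cons]
  simp only [List.length_cons]
  rw [Fin.sum_univ_succ]
  refine congrArg₂ _ (by simp) (Finset.sum_congr rfl fun k _ => ?_)
  rw [Finset.sum_erase_eq_sub (Finset.mem_univ k), Fin.sum_univ_succAbove _ k,
    add_sub_cancel_left, show (y :: c :: l')[k.succ] = (c :: l')[k] from rfl,
    show (y :: c :: l').eraseIdx (k.succ : ℕ) = y :: (c :: l').eraseIdx k from rfl, Fin.val_succ,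
    pfList_cons,
    sum_eraseIdx_eq_sum_succAbove (c :: l') rfl k (fun j b r => (-1 : R) ^ j * z y b * pfList z r),
    Finset.mul_sum]
  refine Finset.sum_congr rfl fun j _ => ?_
  rw [← neg_one_pow_mul_neg_one_pow_succAbove k j]
  simp only [Fin.getElem_fin]
  ring

lemma apply_eq_neg_of_transpose_eq_neg (hz : zᵀ = -z) (x y : α) : z x y = - z y x := by
  simpa using congrFun (congrFun hz y) x

lemma pfList_swap_head (hz : zᵀ = -z) (x y : α) (l : List α) :
    pfList z (x :: y :: l) = - pfList z (y :: x :: l) := by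
  have hD : ∑ k : Fin l.length, ∑ v ∈ Finset.univ.erase k,
        pairSign R k v * (z y l[k] * z x l[v]) * pfList z (eraseTwo l k v) =
      - ∑ k : Fin l.length, ∑ v ∈ Finset.univ.erase k,
        pairSign R k v * (z x l[k] * z y l[v]) * pfList z (eraseTwo l k v) := by
    rw [Finset.sum_comm' (t' := Finset.univ) (s' := fun v => Finset.univ.erase v)
        (fun a b => by simp [Finset.mem_erase, ne_comm]), ← Finset.sum_neg_distrib]
    refine Finset.sum_congr rfl fun v _ => ?_
    rw [← Finset.sum_neg_distrib]
    refine Finset.sum_congr rfl fun k hk => ?_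
    rw [pairSign_swap (Fin.val_ne_of_ne (Finset.ne_of_mem_erase hk)), eraseTwo_comm]
    ring
  rw [pfList_cons_cons, pfList_cons_cons, apply_eq_neg_of_transpose_eq_neg z hz x y, hD]
  ring

lemma pfList_cons_append (c : α) (u v : List α) :
    pfList z (c :: (u ++ v)) =
      ∑ k ∈ Finset.range u.length, (-1) ^ k * z c (u.getD k c) * pfList z (u.eraseIdx k ++ v) +
      (-1) ^ u.length * ∑ k ∈ Finset.range v.length,
        (-1) ^ k * z c (v.getD k c) * pfList z (u ++ v.eraseIdx k) := by
  rw [pfList_cons_eq_sum_range, List.length_append, Finset.sum_range_add, Finset.mul_sum]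
  congr 1
  · refine Finset.sum_congr rfl fun k hk => ?_
    have hk : k < u.length := Finset.mem_range.mp hk
    rw [List.getD_append _ _ _ _ hk, List.eraseIdx_append_of_lt_length hk]
  · refine Finset.sum_congr rfl fun k _ => ?_
    rw [List.getD_append_right _ _ _ _ (by omega), List.eraseIdx_append_of_length_le (by omega),
      Nat.add_sub_cancel_left, pow_add]
    ring

lemma pfList_append_swap (hz : zᵀ = -z) (u : List α) (x y : α) (w : List α) :
    pfList z (u ++ x :: y :: w) = - pfList z (u ++ y :: x :: w) := by
  induction hN : u.length + w.length using Nat.strong_induction_on generalizing u w with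
  | _ N ih =>
  obtain _ | ⟨c, u⟩ := u
  · exact pfList_swap_head z hz x y w
  have ih_u : ∀ k,
      pfList z (u.eraseIdx k ++ x :: y :: w) = - pfList z (u.eraseIdx k ++ y :: x :: w) :=
    fun k => ih _ (by simp at hN; have := List.length_eraseIdx_le u k; omega) _ _ rfl
  have ih_w : ∀ k,
      pfList z (u ++ x :: y :: w.eraseIdx k) = - pfList z (u ++ y :: x :: w.eraseIdx k) :=
    fun k => ih _ (by simp at hN; have := List.length_eraseIdx_le w k; omega) _ _ rfl
  simp only [List.cons_append, pfList_cons_append, List.length_cons, Finset.sum_range_succ',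
    List.getD_cons_succ, List.getD_cons_zero, List.eraseIdx_cons_succ, List.eraseIdx_cons_zero,
    ih_u, ih_w, mul_neg, Finset.sum_neg_distrib]
  ring

lemma pfList_append_cons (hz : zᵀ = -z) (u : List α) (a : α) (w : List α) :
    pfList z (u ++ a :: w) = (-1) ^ u.length * pfList z (a :: (u ++ w)) := by
  induction u using List.reverseRecOn generalizing w with
  | nil => simp
  | append_singleton u c ih =>
    rw [List.append_assoc, List.singleton_append, pfList_append_swap z hz, ih, List.append_assoc,
      List.singleton_append, List.length_append, List.length_singleton, pow_succ]
    ring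

lemma ofFn_eraseIdx {m : ℕ} (g : Fin (m + 1) → α) (k : Fin (m + 1)) :
    (List.ofFn g).eraseIdx k = List.ofFn (g ∘ k.succAbove) := by
  refine List.ext_getElem (by rw [List.length_eraseIdx_of_lt (by simp; omega)]; simp)
    fun i h _ => ?_
  simp only [List.getElem_eraseIdx, List.getElem_ofFn, Function.comp_apply]
  split_ifs with hi <;> congr 1 <;> ext <;> simp [val_succAbove, hi]

lemma pf_submatrix_eq_pfList {m : ℕ} (hm : Even m) (f : Fin m → α) :
    pf (z.submatrix f f) = pfList z (List.ofFn f) := by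
  induction m using Nat.strong_induction_on with
  | _ m ih =>
  obtain _ | _ | m := m
  · simp [pf_fin_zero]
  · exact absurd hm (by decide)
  have hm' : Even m := by simpa [Nat.even_add] using hm
  rw [pf_eq_sum_first_row hm', List.ofFn_succ, pfList_cons]
  rw [← Fin.sum_congr' _ (by simp : m + 1 = (List.ofFn fun i => f i.succ).length)]
  refine Finset.sum_congr rfl fun k _ => ?_
  simp only [Fin.val_cast, Fin.getElem_fin]
  rw [Matrix.submatrix_submatrix, ih m (by omega) hm', ofFn_eraseIdx]
  simp only [List.getElem_ofFn, Matrix.submatrix_apply, pairCompl, Function.comp_def]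

end ListPfaffian

section SortedLists

variable {β : Type*} [LinearOrder β]

lemma Finset.sort_eq_of_pairwise_lt {s : Finset β} {l : List β}
    (hl : l.Pairwise (· < ·)) (h : ∀ x, x ∈ l ↔ x ∈ s) : s.sort = l :=
  (Finset.sortedLT_sort s).pairwise.eq_of_mem_iff hl fun x => by rw [Finset.mem_sort, h]

lemma Finset.sort_erase_getElem (s : Finset β) (j : ℕ)
    (hj : j < s.sort.length) : (s.erase s.sort[j]).sort = s.sort.eraseIdx j := by
  have hnd := Finset.sort_nodup s (· ≤ ·)
  refine Finset.sort_eq_of_pairwise_lt ((Finset.sortedLT_sort s).pairwise.eraseIdx j) fun x => ?_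
  rw [← hnd.erase_getElem j hj, hnd.mem_erase_iff, Finset.mem_erase, Finset.mem_sort]

lemma Finset.sort_insert_eq_filter_append {s : Finset β} {a : β}
    (ha : a ∉ s) : (insert a s).sort =
      (s.filter (· < a)).sort ++ a :: (s.filter (a < ·)).sort := by
  refine Finset.sort_eq_of_pairwise_lt ?_ fun x => ?_
  · simp only [List.pairwise_append, List.pairwise_cons, List.mem_cons, Finset.mem_sort,
      Finset.mem_filter]
    refine ⟨(Finset.sortedLT_sort _).pairwise,
      ⟨fun _ hb => hb.2, (Finset.sortedLT_sort _).pairwise⟩, ?_⟩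
    rintro x ⟨-, hx⟩ y (rfl | ⟨-, hy⟩)
    exacts [hx, hx.trans hy]
  · simp only [List.mem_append, List.mem_cons, Finset.mem_sort, Finset.mem_filter,
      Finset.mem_insert]
    rcases lt_trichotomy x a with h | rfl | h
    · simp [h, h.not_gt, or_comm]
    · simp
    · simp [h, h.not_gt, h.ne']

lemma Finset.sort_eq_filter_append {s : Finset β} {a : β}
    (ha : a ∉ s) : s.sort = (s.filter (· < a)).sort ++ (s.filter (a < ·)).sort := by
  have key := Finset.sort_erase_getElem (insert a s) (s.filter (· < a)).sort.length
    (by simp [Finset.sort_insert_eq_filter_append ha])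
  simp only [Finset.sort_insert_eq_filter_append ha, List.getElem_append_right (le_refl _),
    Nat.sub_self, List.getElem_cons_zero, Finset.erase_insert ha] at key
  rw [key, List.eraseIdx_append_of_length_le (le_refl _), Nat.sub_self, List.eraseIdx_cons_zero]

lemma Finset.ofFn_orderEmbOfFin (s : Finset β) {k : ℕ} (h : s.card = k) :
    List.ofFn (s.orderEmbOfFin h) = s.sort :=
  List.ext_getElem (by simp [h]) fun i _ _ => by simp [Finset.orderEmbOfFin_apply]

end SortedLists

section InsertedIndex

variable {R : Type*} [CommRing R] {n : ℕ} (z : Matrix (Fin n) (Fin n) R)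

lemma pfB_eq_pfList {B : Finset (Fin n)} (hB : Even B.card) : pfB z B = pfList z B.sort := by
  rw [pfB, pf_submatrix_eq_pfList z hB, Finset.ofFn_orderEmbOfFin]

lemma insSign_mul_pfB_insert_eq_pfList (hz : zᵀ = -z) {a : Fin n} {S : Finset (Fin n)}
    (ha : a ∉ S) (hS : Odd S.card) : insSign a S * pfB z (insert a S) = pfList z (a :: S.sort) := by
  rw [pfB_eq_pfList z (by rw [Finset.card_insert_of_notMem ha]; exact hS.add_one),
    Finset.sort_insert_eq_filter_append ha, pfList_append_cons z hz,
    ← Finset.sort_eq_filter_append ha,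
    Finset.length_sort, insSign, ← mul_assoc, ← pow_add, Even.neg_one_pow ⟨_, rfl⟩, one_mul]

lemma insSign_mul_pfB_insert_eq_sum_erase (hz : zᵀ = -z) {a : Fin n} {S : Finset (Fin n)}
    (ha : a ∉ S) (hS : Odd S.card) : insSign a S * pfB z (insert a S) = ∑ j : Fin S.card,
      (-1) ^ (j : ℕ) * z a (S.orderEmbOfFin rfl j) * pfB z (S.erase (S.orderEmbOfFin rfl j)) := by
  rw [insSign_mul_pfB_insert_eq_pfList z hz ha hS, pfList_cons,
    ← Fin.sum_congr' _ (Finset.length_sort (s := S) (· ≤ ·)).symm]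
  refine Finset.sum_congr rfl fun j _ => ?_
  have hj : (j : ℕ) < S.sort.length := by simp
  have hEven : Even (S.erase S.sort[(j : ℕ)]).card := by
    rw [Finset.card_erase_of_mem ((Finset.mem_sort _).mp (List.getElem_mem hj))]
    exact Nat.Odd.sub_odd hS odd_one
  simp only [Fin.getElem_fin, Fin.val_cast, Finset.orderEmbOfFin_apply]
  rw [pfB_eq_pfList z hEven, Finset.sort_erase_getElem S j hj]

end InsertedIndex

/-- Wick's theorem / quadratic Grassmann–Plücker relation for Pfaffians:
for a skew-symmetric matrix `z` over a commutative ring and disjoint odd-cardinality index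
sets `σ = {σ_1 < … < σ_r}` and `τ = {τ_1 < … < τ_s}`, one has
`Σ_i (-1)^i Pf_{{τ_i}∪σ} Pf_{τ∖{τ_i}} + Σ_j (-1)^j Pf_{σ∖{σ_j}} Pf_{{σ_j}∪τ} = 0`,
where the Pfaffians on sorted index sets carry the reordering signs. -/
theorem stmt1 {R : Type*} [CommRing R] (n : ℕ) (z : Matrix (Fin n) (Fin n) R)
    (hz : zᵀ = -z) (σ τ : Finset (Fin n)) (hσ : Odd σ.card) (hτ : Odd τ.card)
    (hdisj : Disjoint σ τ) :
    (∑ i : Fin τ.card,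
      (-1 : R) ^ (i.val + 1) *
        (insSign (τ.orderEmbOfFin rfl i) σ * pfB z (insert (τ.orderEmbOfFin rfl i) σ)) *
        pfB z (τ.erase (τ.orderEmbOfFin rfl i)))
    + (∑ j : Fin σ.card,
      (-1 : R) ^ (j.val + 1) * pfB z (σ.erase (σ.orderEmbOfFin rfl j)) *
        (insSign (σ.orderEmbOfFin rfl j) τ * pfB z (insert (σ.orderEmbOfFin rfl j) τ))) = 0 := by
  set s := σ.orderEmbOfFin rfl
  set t := τ.orderEmbOfFin rfl
  have hτσ : ∀ i, insSign (t i) σ * pfB z (insert (t i) σ) =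
      ∑ j : Fin σ.card, (-1) ^ (j : ℕ) * z (t i) (s j) * pfB z (σ.erase (s j)) := fun i =>
    insSign_mul_pfB_insert_eq_sum_erase z hz
      (disjoint_right.mp hdisj (τ.orderEmbOfFin_mem rfl i)) hσ
  have hστ : ∀ j, insSign (s j) τ * pfB z (insert (s j) τ) =
      ∑ i : Fin τ.card, (-1) ^ (i : ℕ) * z (s j) (t i) * pfB z (τ.erase (t i)) := fun j =>
    insSign_mul_pfB_insert_eq_sum_erase z hz
      (disjoint_left.mp hdisj (σ.orderEmbOfFin_mem rfl j)) hτ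
  simp only [hτσ, hστ, Finset.mul_sum, Finset.sum_mul]
  rw [Finset.sum_comm (s := Finset.univ (α := Fin σ.card)), ← Finset.sum_add_distrib]
  refine Finset.sum_eq_zero fun i _ => ?_
  rw [← Finset.sum_add_distrib]
  refine Finset.sum_eq_zero fun j _ => ?_
  rw [apply_eq_neg_of_transpose_eq_neg z hz (t i) (s j)]
  ring
end

section
/- With notation as in the weight–divisor correspondence: for an even subset B ⊆ [n] with |B| = 2s, define W(B) = ½(Σ_{i∈B} L_i − Σ_{i∉B} L_i) ∈ h* and D(B) ∈ Pic ⊗ Q by D(B) = s(H − Σ_{i=1}^n E_i) + Σ_{b∈B∪{n}} E_b if n ∉ B, and D(B) = (s−1)(H − Σ E_i) + Σ_{b∈B∖{n}} E_b if n ∈ B. Then T(W(B)) = D(B) + ¼K, where T is the isometry sending β_i ↦ α_i and K is the canonical class. -/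
open Finset

/-- The canonical class `K = -(n-2)H + (n-4)(E_1 + ⋯ + E_n)` in `Pic ⊗ ℚ`. -/
def KcanQ (n : ℕ) : Fin (n + 1) → ℚ := fun j => if j = 0 then -((n : ℚ) - 2) else (n : ℚ) - 4

/-- The simple roots of `D_n` in `Pic ⊗ ℚ`: `α_i = E_i - E_{i+1}` for `1 ≤ i ≤ n-1`,
and `α_n = H - E_1 - ⋯ - E_{n-2}`. -/
def alphaRootQ (n i : ℕ) : Fin (n + 1) → ℚ :=
  if i < n then
    fun j => if j.val = i then 1 else if j.val = i + 1 then -1 else 0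
  else
    fun j => if j.val = 0 then 1 else if j.val ≤ n - 2 then -1 else 0

/-- The simple roots of `so_{2n}` in `h* = ℚ^n`: `β_i = L_i - L_{i+1}` for `i ≤ n-2`,
`β_{n-1} = L_{n-1} + L_n`, `β_n = L_{n-1} - L_n` (coordinate `j : Fin n` is `L_{j+1}`). -/
def betaRoot (n i : ℕ) : Fin n → ℚ :=
  if i ≤ n - 2 then
    fun j => if j.val + 1 = i then 1 else if j.val + 1 = i + 1 then -1 else 0
  else if i = n - 1 then
    fun j => if j.val + 1 = n - 1 ∨ j.val + 1 = n then 1 else 0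
  else
    fun j => if j.val + 1 = n - 1 then 1 else if j.val + 1 = n then -1 else 0

/-- The weight `W(B) = ½(Σ_{i∈B} L_i - Σ_{i∉B} L_i)` of the even half-spin representation,
for `B ⊆ {1, …, n}`. -/
def WB (n : ℕ) (B : Finset ℕ) : Fin n → ℚ :=
  fun j => if j.val + 1 ∈ B then 1 / 2 else -(1 / 2)

/-- The `(-1)`-divisor class `D(B)`: for `|B| = 2s`,
`D(B) = s(H - ΣE_i) + Σ_{b ∈ B∪{n}} E_b` if `n ∉ B`, and
`D(B) = (s-1)(H - ΣE_i) + Σ_{b ∈ B∖{n}} E_b` if `n ∈ B`. -/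
def DB (n : ℕ) (B : Finset ℕ) : Fin (n + 1) → ℚ :=
  fun j =>
    (if n ∈ B then ((B.card / 2 : ℕ) : ℚ) - 1 else ((B.card / 2 : ℕ) : ℚ)) *
        (if j = 0 then 1 else -1) +
      (if j ≠ 0 ∧ j.val ∈ (if n ∈ B then B.erase n else insert n B) then 1 else 0)

/-- Coordinate weights: `vB B j = ½` if `j ∈ B` and `-½` otherwise. -/
def vB (B : Finset ℕ) (j : ℕ) : ℚ := if j ∈ B then 1 / 2 else -(1 / 2)

/-- The coefficients of `W(B)` in the basis of simple roots `β_1, …, β_n`. -/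
def cCoef (n : ℕ) (B : Finset ℕ) (i : ℕ) : ℚ :=
  if i ≤ n - 2 then ∑ j ∈ Finset.Icc 1 i, vB B j
  else if i = n - 1 then ((∑ j ∈ Finset.Icc 1 (n - 1), vB B j) + vB B n) / 2
  else ((∑ j ∈ Finset.Icc 1 (n - 1), vB B j) - vB B n) / 2

lemma cCoef_step (n : ℕ) (B : Finset ℕ) (k : ℕ) (h1 : 1 ≤ k) (h2 : k ≤ n - 2) :
    cCoef n B k = cCoef n B (k - 1) + vB B k := by
  unfold cCoef
  rw [if_pos h2, if_pos (by omega : k - 1 ≤ n - 2)]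
  have : Finset.Icc 1 k = insert k (Finset.Icc 1 (k - 1)) := by
    ext a; simp [Finset.mem_Icc]; omega
  rw [this, Finset.sum_insert (by simp [Finset.mem_Icc]; omega)]
  ring

lemma sum_vB (B : Finset ℕ) (m : ℕ) :
    ∑ j ∈ Finset.Icc 1 m, vB B j = ((B ∩ Finset.Icc 1 m).card : ℚ) - m / 2 := by
  have h1 : ∀ j, vB B j = (if j ∈ B then (1:ℚ) else 0) - 1/2 := by
    intro j; unfold vB; split_ifs <;> norm_num
  simp_rw [h1]
  rw [Finset.sum_sub_distrib, Finset.sum_boole, Finset.sum_const, Finset.filter_mem_eq_inter,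
    Finset.inter_comm, Nat.card_Icc]
  simp
  ring

/-- `W(B)` expanded in the basis of simple roots. -/
lemma WB_eq (n : ℕ) (hn : 5 ≤ n) (B : Finset ℕ) :
    WB n B = ∑ i ∈ Finset.Icc 1 n, cCoef n B i • betaRoot n i := by
  funext j
  simp only [Finset.sum_apply, Pi.smul_apply, smul_eq_mul]
  have hsplit : Finset.Icc 1 n = insert n (insert (n - 1) (Finset.Icc 1 (n - 2))) := by
    ext a; simp [Finset.mem_Icc]; omega
  rw [hsplit, Finset.sum_insert (by simp [Finset.mem_Icc]; omega),
    Finset.sum_insert (by simp [Finset.mem_Icc]; omega)]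
  have hterm : ∀ i ∈ Finset.Icc 1 (n - 2),
      cCoef n B i * betaRoot n i j =
        (if j.val + 1 = i then cCoef n B i else 0) +
          (if (j : ℕ) = i then -(cCoef n B i) else 0) := by
    intro i hi
    rw [Finset.mem_Icc] at hi
    unfold betaRoot
    rw [if_pos hi.2]
    split_ifs <;> first | ring1 | (exfalso; omega)
  rw [Finset.sum_congr rfl hterm, Finset.sum_add_distrib, Finset.sum_ite_eq,
    Finset.sum_ite_eq]
  have hb1 : betaRoot n (n - 1) j = if j.val + 1 = n - 1 ∨ j.val + 1 = n then 1 else 0 := by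
    unfold betaRoot
    have h1 : ¬ (n - 1 ≤ n - 2) := by omega
    rw [if_neg h1, if_pos rfl]
  have hb2 : betaRoot n n j = if j.val + 1 = n - 1 then 1 else if j.val + 1 = n then -1 else 0 := by
    unfold betaRoot
    have h1 : ¬ (n ≤ n - 2) := by omega
    have h2 : ¬ (n = n - 1) := by omega
    rw [if_neg h1, if_neg h2]
  rw [hb1, hb2]
  have hj : (j : ℕ) < n := j.isLt
  have hWB : WB n B j = vB B ((j : ℕ) + 1) := rfl
  rw [hWB]
  have hc1 : cCoef n B (n - 1) = ((∑ j ∈ Finset.Icc 1 (n - 1), vB B j) + vB B n) / 2 := by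
    unfold cCoef
    have h1 : ¬ (n - 1 ≤ n - 2) := by omega
    rw [if_neg h1, if_pos rfl]
  have hc2 : cCoef n B n = ((∑ j ∈ Finset.Icc 1 (n - 1), vB B j) - vB B n) / 2 := by
    unfold cCoef
    have h1 : ¬ (n ≤ n - 2) := by omega
    have h2 : ¬ (n = n - 1) := by omega
    rw [if_neg h1, if_neg h2]
  rcases lt_trichotomy ((j : ℕ) + 1) (n - 1) with hk | hk | hk
  · have hstep := cCoef_step n B ((j : ℕ) + 1) (by omega) (by omega)
    simp only [Nat.add_sub_cancel] at hstep
    rw [hstep]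
    simp only [Finset.mem_Icc]
    rcases eq_or_ne ((j : ℕ)) 0 with h0 | h0
    · have hc0 : cCoef n B ((j : ℕ)) = 0 := by
        unfold cCoef
        rw [h0, if_pos (by omega : 0 ≤ n - 2)]
        simp
      rw [hc0, h0]
      split_ifs <;> first | ring1 | (exfalso; first | omega | tauto)
    · split_ifs <;> first | ring1 | (exfalso; first | omega | tauto)
  · have hc3 : cCoef n B ((j : ℕ)) = ∑ i ∈ Finset.Icc 1 (n - 2), vB B i := by
      unfold cCoef
      rw [if_pos (by omega : (j : ℕ) ≤ n - 2)]
      have hj2 : (j : ℕ) = n - 2 := by omega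
      rw [hj2]
    have hS : ∑ i ∈ Finset.Icc 1 (n - 1), vB B i
        = (∑ i ∈ Finset.Icc 1 (n - 2), vB B i) + vB B (n - 1) := by
      have h : Finset.Icc 1 (n - 1) = insert (n - 1) (Finset.Icc 1 (n - 2)) := by
        ext a; simp [Finset.mem_Icc]; omega
      rw [h, Finset.sum_insert (by simp [Finset.mem_Icc]; omega)]
      ring
    rw [hc1, hc2, hc3, hS, hk]
    simp only [Finset.mem_Icc]
    split_ifs <;> first | ring1 | (exfalso; first | omega | tauto)
  · have hkn : (j : ℕ) + 1 = n := by omega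
    rw [hc1, hc2, hkn]
    simp only [Finset.mem_Icc]
    split_ifs <;> first | ring1 | (exfalso; first | omega | tauto)

set_option maxHeartbeats 1000000 in
/-- The image of the coefficient expansion under `β_i ↦ α_i` equals `D(B) + ¼K`. -/
lemma sum_alpha (n : ℕ) (hn : 5 ≤ n) (B : Finset ℕ) (hB : B ⊆ Finset.Icc 1 n)
    (hBeven : Even B.card) :
    ∑ i ∈ Finset.Icc 1 n, cCoef n B i • alphaRootQ n i = DB n B + (1 / 4 : ℚ) • KcanQ n := by
  obtain ⟨s, hs⟩ := hBeven
  have hdiv : B.card / 2 = s := by omega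
  have hBint : B ∩ Finset.Icc 1 (n - 1) = B.erase n := by
    ext a
    simp only [Finset.mem_inter, Finset.mem_Icc, Finset.mem_erase]
    constructor
    · rintro ⟨ha, h1, h2⟩; exact ⟨by omega, ha⟩
    · rintro ⟨ha, hb⟩
      have := hB hb
      rw [Finset.mem_Icc] at this
      exact ⟨hb, by omega, by omega⟩
  have hScard : ((B.erase n).card : ℚ) = (B.card : ℚ) - (if n ∈ B then 1 else 0) := by
    by_cases hnB : n ∈ B
    · rw [if_pos hnB, Finset.card_erase_of_mem hnB]
      have : 1 ≤ B.card := Finset.card_pos.mpr ⟨n, hnB⟩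
      push_cast [Nat.cast_sub this]
      ring
    · rw [if_neg hnB, Finset.erase_eq_of_notMem hnB]; ring
  have hn1 : ((n - 1 : ℕ) : ℚ) = (n : ℚ) - 1 := by
    rw [Nat.cast_sub (by omega : 1 ≤ n)]; norm_num
  have hF1 : ∑ i ∈ Finset.Icc 1 (n - 1), vB B i
      = (B.card : ℚ) - (if n ∈ B then 1 else 0) - ((n : ℚ) - 1) / 2 := by
    rw [sum_vB, hBint, hScard, hn1]
  have hF2 : (B.card : ℚ) = 2 * s := by rw [hs]; push_cast; ring
  have hF3 : ((B.card / 2 : ℕ) : ℚ) = (s : ℚ) := by rw [hdiv]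
  funext j
  simp only [Finset.sum_apply, Pi.smul_apply, smul_eq_mul, Pi.add_apply]
  have hsplit : Finset.Icc 1 n = insert n (Finset.Icc 1 (n - 1)) := by
    ext a; simp [Finset.mem_Icc]; omega
  rw [hsplit, Finset.sum_insert (by simp [Finset.mem_Icc]; omega)]
  have han : alphaRootQ n n j = if (j : ℕ) = 0 then 1 else if (j : ℕ) ≤ n - 2 then -1 else 0 := by
    unfold alphaRootQ
    rw [if_neg (lt_irrefl n)]
  have hcn : cCoef n B n = ((∑ j ∈ Finset.Icc 1 (n - 1), vB B j) - vB B n) / 2 := by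
    unfold cCoef
    have h1 : ¬ (n ≤ n - 2) := by omega
    have h2 : ¬ (n = n - 1) := by omega
    rw [if_neg h1, if_neg h2]
  have hcn1 : cCoef n B (n - 1) = ((∑ j ∈ Finset.Icc 1 (n - 1), vB B j) + vB B n) / 2 := by
    unfold cCoef
    have h1 : ¬ (n - 1 ≤ n - 2) := by omega
    rw [if_neg h1, if_pos rfl]
  rcases eq_or_ne j 0 with hj0 | hj0
  · -- the H coordinate
    subst hj0
    have hzero : ∀ i ∈ Finset.Icc 1 (n - 1), cCoef n B i * alphaRootQ n i 0 = 0 := by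
      intro i hi
      rw [Finset.mem_Icc] at hi
      unfold alphaRootQ
      rw [if_pos (by omega : i < n)]
      simp only [Fin.val_zero]
      split_ifs <;> first | ring1 | (exfalso; first | omega | tauto)
    rw [Finset.sum_eq_zero hzero, han]
    simp only [Fin.val_zero, if_pos rfl]
    rw [hcn, hF1]
    unfold DB KcanQ vB
    simp only [if_pos rfl]
    have hco : ¬((0 : Fin (n + 1)) ≠ 0 ∧ (0 : Fin (n + 1)).val ∈
        (if n ∈ B then B.erase n else insert n B)) := by simp
    rw [if_neg hco]
    split_ifs <;> rw [hF3] <;> push_cast <;> linarith [hF2]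
  · -- an E_k coordinate
    have hjv : 1 ≤ (j : ℕ) := by
      rcases Nat.eq_zero_or_pos (j : ℕ) with h | h
      · exact absurd (Fin.ext h) hj0
      · omega
    have hterm : ∀ i ∈ Finset.Icc 1 (n - 1),
        cCoef n B i * alphaRootQ n i j =
          (if (j : ℕ) = i then cCoef n B i else 0) +
            (if (j : ℕ) - 1 = i then -(cCoef n B i) else 0) := by
      intro i hi
      rw [Finset.mem_Icc] at hi
      unfold alphaRootQ
      rw [if_pos (by omega : i < n)]
      split_ifs <;> first | ring1 | (exfalso; omega)
    rw [Finset.sum_congr rfl hterm, Finset.sum_add_distrib, Finset.sum_ite_eq,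
      Finset.sum_ite_eq, han]
    have hDB : DB n B j + 1 / 4 * KcanQ n j =
        -(if n ∈ B then (s : ℚ) - 1 else (s : ℚ)) +
          (if (j : ℕ) ∈ (if n ∈ B then B.erase n else insert n B) then 1 else 0) +
          ((n : ℚ) - 4) / 4 := by
      unfold DB KcanQ
      rw [hF3, if_neg hj0, if_neg hj0]
      simp only [ne_eq, hj0, not_false_iff, true_and]
      split_ifs <;> ring
    rw [hDB]
    have hjn : (j : ℕ) ≤ n := by omega
    rcases lt_trichotomy ((j : ℕ)) (n - 1) with hk | hk | hk
    · -- 1 ≤ k ≤ n-2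
      have hmem : ((j : ℕ) ∈ (if n ∈ B then B.erase n else insert n B)) ↔ (j : ℕ) ∈ B := by
        split_ifs with h
        · rw [Finset.mem_erase]
          exact ⟨fun h' => h'.2, fun h' => ⟨by omega, h'⟩⟩
        · rw [Finset.mem_insert]
          exact ⟨fun h' => h'.resolve_left (by omega), fun h' => Or.inr h'⟩
      rw [if_neg (show ¬(j : ℕ) = 0 by omega), if_pos (show (j : ℕ) ≤ n - 2 by omega),
        if_pos (show (j : ℕ) ∈ Finset.Icc 1 (n - 1) by rw [Finset.mem_Icc]; omega)]
      have hck : cCoef n B ((j : ℕ)) = cCoef n B ((j : ℕ) - 1) + vB B ((j : ℕ)) :=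
        cCoef_step n B _ hjv (by omega)
      rcases eq_or_lt_of_le hjv with h1 | h1
      · rw [if_neg (show ¬(j : ℕ) - 1 ∈ Finset.Icc 1 (n - 1) by rw [Finset.mem_Icc]; omega)]
        have hc0 : cCoef n B ((j : ℕ) - 1) = 0 := by
          unfold cCoef
          rw [if_pos (by omega : (j : ℕ) - 1 ≤ n - 2), show (j : ℕ) - 1 = 0 by omega]
          simp
        rw [hck, hc0, hcn, hF1]
        simp only [hmem]
        unfold vB
        split_ifs <;> push_cast <;> linarith [hF2]
      · rw [if_pos (show (j : ℕ) - 1 ∈ Finset.Icc 1 (n - 1) by rw [Finset.mem_Icc]; omega)]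
        rw [hck, hcn, hF1]
        simp only [hmem]
        unfold vB
        split_ifs <;> push_cast <;> linarith [hF2]
    · -- k = n-1
      have hmem : ((j : ℕ) ∈ (if n ∈ B then B.erase n else insert n B)) ↔ (j : ℕ) ∈ B := by
        split_ifs with h
        · rw [Finset.mem_erase]
          exact ⟨fun h' => h'.2, fun h' => ⟨by omega, h'⟩⟩
        · rw [Finset.mem_insert]
          exact ⟨fun h' => h'.resolve_left (by omega), fun h' => Or.inr h'⟩
      rw [if_neg (show ¬(j : ℕ) = 0 by omega), if_neg (show ¬(j : ℕ) ≤ n - 2 by omega),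
        if_pos (show (j : ℕ) ∈ Finset.Icc 1 (n - 1) by rw [Finset.mem_Icc]; omega),
        if_pos (show (j : ℕ) - 1 ∈ Finset.Icc 1 (n - 1) by rw [Finset.mem_Icc]; omega)]
      have hS2 : ∑ i ∈ Finset.Icc 1 (n - 1), vB B i
          = (∑ i ∈ Finset.Icc 1 (n - 1 - 1), vB B i) + vB B (n - 1) := by
        have h : Finset.Icc 1 (n - 1) = insert (n - 1) (Finset.Icc 1 (n - 1 - 1)) := by
          ext a; simp [Finset.mem_Icc]; omega
        rw [h, Finset.sum_insert (by simp [Finset.mem_Icc]; omega)]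
        ring
      have hcn2 : cCoef n B (n - 1 - 1)
          = (∑ i ∈ Finset.Icc 1 (n - 1), vB B i) - vB B (n - 1) := by
        unfold cCoef
        rw [if_pos (by omega : n - 1 - 1 ≤ n - 2)]
        linarith [hS2]
      rw [hk] at hmem ⊢
      rw [hcn1, hcn2, hF1]
      simp only [hmem]
      unfold vB
      split_ifs <;> push_cast <;> linarith [hF2]
    · -- k = n
      have hkn : (j : ℕ) = n := by omega
      rw [if_neg (show ¬(j : ℕ) = 0 by omega), if_neg (show ¬(j : ℕ) ≤ n - 2 by omega),
        if_neg (show ¬(j : ℕ) ∈ Finset.Icc 1 (n - 1) by rw [Finset.mem_Icc]; omega),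
        if_pos (show (j : ℕ) - 1 ∈ Finset.Icc 1 (n - 1) by rw [Finset.mem_Icc]; omega)]
      rw [hkn]
      have hmem : (if (n : ℕ) ∈ (if n ∈ B then B.erase n else insert n B) then (1:ℚ) else 0)
          = (if n ∈ B then 0 else 1) := by
        by_cases hnb : n ∈ B
        · have h1 : (if n ∈ B then B.erase n else insert n B) = B.erase n := if_pos hnb
          rw [h1, if_neg (Finset.notMem_erase n B), if_pos hnb]
        · have h1 : (if n ∈ B then B.erase n else insert n B) = insert n B := if_neg hnb
          rw [h1, if_pos (Finset.mem_insert_self n B), if_neg hnb]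
      rw [hcn1, hF1, hmem]
      unfold vB
      split_ifs <;> push_cast <;> linarith [hF2]

/-- for any even subset `B ⊆ {1, …, n}`, the isometry `T` (given by
`T(β_i) = α_i`) satisfies `T(W(B)) = D(B) + ¼K`. -/
theorem stmt7 (n : ℕ) (hn : 5 ≤ n) (T : (Fin n → ℚ) →ₗ[ℚ] (Fin (n + 1) → ℚ))
    (hT : ∀ i : ℕ, 1 ≤ i → i ≤ n → T (betaRoot n i) = alphaRootQ n i)
    (B : Finset ℕ) (hB : B ⊆ Finset.Icc 1 n) (hBeven : Even B.card) :
    T (WB n B) = DB n B + (1 / 4 : ℚ) • KcanQ n := by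
  rw [WB_eq n hn B, map_sum]
  have hc : ∀ i ∈ Finset.Icc 1 n,
      T (cCoef n B i • betaRoot n i) = cCoef n B i • alphaRootQ n i := by
    intro i hi
    rw [Finset.mem_Icc] at hi
    rw [map_smul, hT i hi.1 hi.2]
  rw [Finset.sum_congr rfl hc]
  exact sum_alpha n hn B hB hBeven
end

section
/- Quadratic monomial from incomparable pairs: define a partial order on even subsets of [n] by σ ⪰ τ iff |σ| ≥ |τ| and σ_i ≤ τ_i for i = 1,…,|τ| (where σ_1 < σ_2 < … lists elements increasingly). Then for any two even subsets σ, τ, either σ and τ are comparable in this order, or there exist even subsets σ', τ' with σ' ⪰ τ', {σ', τ'} ≠ {σ, τ}, and 1_{σ'} + 1_{τ'} = 1_σ + 1_τ (i.e., f_{σ'} f_{τ'} has the same multidegree as f_σ f_τ). -/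
set_option linter.unnecessarySimpa false

open Finset

/-- The restriction of Young's lattice order to subsets of `ℕ`:
`σ ⪰ τ` iff `|σ| ≥ |τ|` and the `i`-th smallest element of `σ` is `≤` the `i`-th smallest
element of `τ` for all `i ≤ |τ|`. -/
def youngGE (σ τ : Finset ℕ) : Prop :=
  τ.card ≤ σ.card ∧
    ∀ i < τ.card, (σ.sort (· ≤ ·)).getD i 0 ≤ (τ.sort (· ≤ ·)).getD i 0

/-- Indicator vector of a subset of `ℕ`. -/
def ind (A : Finset ℕ) : ℕ → ℤ := fun i => if i ∈ A then 1 else 0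

open scoped symmDiff

/-- The `i`-th smallest element of `A` has at least `i+1` elements of `A` at most it. -/
lemma count_ge (A : Finset ℕ) (i : ℕ) (h : i < A.card) :
    i + 1 ≤ (A.filter (fun x => x ≤ (A.sort (· ≤ ·)).getD i 0)).card := by
  classical
  set l := A.sort (· ≤ ·) with hl
  have hlen : l.length = A.card := Finset.length_sort _
  have hi : i < l.length := by omega
  have hnd : l.Nodup := A.sort_nodup _
  have hinj : Set.InjOn (fun j => l.getD j 0) ↑(Finset.range (i + 1)) := by
    intro a ha b hb hab
    simp only [Finset.coe_range, Set.mem_Iio] at ha hb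
    have ha' : a < l.length := by omega
    have hb' : b < l.length := by omega
    simp only [List.getD_eq_getElem _ _ ha', List.getD_eq_getElem _ _ hb'] at hab
    exact hnd.getElem_inj_iff.mp hab
  have hsub : (Finset.range (i + 1)).image (fun j => l.getD j 0) ⊆
      A.filter (fun x => x ≤ l.getD i 0) := by
    intro x hx
    simp only [Finset.mem_image, Finset.mem_range] at hx
    obtain ⟨j, hj, rfl⟩ := hx
    have hj' : j < l.length := by omega
    rw [Finset.mem_filter]
    constructor
    · rw [← Finset.mem_sort (· ≤ ·) (s := A), ← hl, List.getD_eq_getElem _ _ hj']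
      exact List.getElem_mem _
    · rw [List.getD_eq_getElem _ _ hj', List.getD_eq_getElem _ _ hi]
      exact (A.pairwise_sort (· ≤ ·)).rel_get_of_le
        (show (⟨j, hj'⟩ : Fin l.length) ≤ ⟨i, hi⟩ from by
          simpa using Nat.lt_succ_iff.mp hj)
  calc i + 1 = ((Finset.range (i + 1)).image (fun j => l.getD j 0)).card := by
        rw [Finset.card_image_of_injOn hinj, Finset.card_range]
    _ ≤ _ := Finset.card_le_card hsub

/-- If `B` has at least `i+1` elements at most `c`, its `i`-th smallest element is `≤ c`. -/
lemma getD_le (B : Finset ℕ) (c i : ℕ)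
    (h : i + 1 ≤ (B.filter (fun x => x ≤ c)).card) :
    (B.sort (· ≤ ·)).getD i 0 ≤ c := by
  classical
  set l := B.sort (· ≤ ·) with hl
  have hlen : l.length = B.card := Finset.length_sort _
  have hi : i < l.length := by
    have := Finset.card_filter_le B (fun x => x ≤ c); omega
  by_contra hc
  push_neg at hc
  rw [List.getD_eq_getElem _ _ hi] at hc
  have hsub : B.filter (fun x => x ≤ c) ⊆ (Finset.range i).image (fun j => l.getD j 0) := by
    intro x hx
    rw [Finset.mem_filter] at hx
    obtain ⟨hxB, hxc⟩ := hx
    have hxl : x ∈ l := (Finset.mem_sort _).mpr hxB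
    obtain ⟨j, hj, hxe⟩ := List.getElem_of_mem hxl
    have hji : j < i := by
      by_contra hji
      push_neg at hji
      have : l[i] ≤ l[j] := (B.pairwise_sort (· ≤ ·)).rel_get_of_le
        (show (⟨i, hi⟩ : Fin l.length) ≤ ⟨j, hj⟩ from by simpa using hji)
      omega
    refine Finset.mem_image.mpr ⟨j, Finset.mem_range.mpr hji, ?_⟩
    rw [List.getD_eq_getElem _ _ hj, hxe]
  have h1 := Finset.card_le_card hsub
  have h2 := Finset.card_image_le (s := Finset.range i) (f := fun j => l.getD j 0)
  rw [Finset.card_range] at h2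
  omega

/-- Sufficient counting criterion for the Young order. -/
lemma youngGE_of_counts (A B : Finset ℕ) (hc : B.card ≤ A.card)
    (h : ∀ c, (B.filter (fun x => x ≤ c)).card ≤ (A.filter (fun x => x ≤ c)).card) :
    youngGE A B :=
  ⟨hc, fun i hi => getD_le A _ i (le_trans (count_ge B i hi) (h _))⟩

/-- for any two even subsets `σ, τ` of `{1, …, n}`, either `σ` and `τ` are
comparable in (the even-subset restriction of) Young's lattice, or there is a distinct
unordered pair of even subsets `σ' ⪰ τ'` with the same multidegree, i.e. with
`1_{σ'} + 1_{τ'} = 1_σ + 1_τ`. -/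
theorem stmt16 (n : ℕ) (σ τ : Finset ℕ)
    (hσ : σ ⊆ Finset.Icc 1 n) (hτ : τ ⊆ Finset.Icc 1 n)
    (hσe : Even σ.card) (hτe : Even τ.card) :
    youngGE σ τ ∨ youngGE τ σ ∨
      ∃ σ' τ' : Finset ℕ, σ' ⊆ Finset.Icc 1 n ∧ τ' ⊆ Finset.Icc 1 n ∧
        Even σ'.card ∧ Even τ'.card ∧ youngGE σ' τ' ∧
        ¬(σ' = σ ∧ τ' = τ) ∧ ¬(σ' = τ ∧ τ' = σ) ∧
        ∀ i : ℕ, ind σ' i + ind τ' i = ind σ i + ind τ i := by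
  classical
  by_cases h1 : youngGE σ τ
  · exact Or.inl h1
  by_cases h2 : youngGE τ σ
  · exact Or.inr (Or.inl h2)
  refine Or.inr (Or.inr ?_)
  have hsum : Even ((σ ∪ τ).card + (σ ∩ τ).card) := by
    rw [Finset.card_union_add_card_inter]; exact hσe.add hτe
  have hsub_union : σ ∪ τ ⊆ Finset.Icc 1 n := Finset.union_subset hσ hτ
  have hiu : σ ∩ τ ⊆ σ ∪ τ := (Finset.inter_subset_left).trans Finset.subset_union_left
  by_cases hint : Even (σ ∩ τ).card
  · -- intersection has even cardinality: take union and intersection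
    have hue : Even (σ ∪ τ).card := (Nat.even_add.mp hsum).mpr hint
    have hy : youngGE (σ ∪ τ) (σ ∩ τ) := by
      refine youngGE_of_counts _ _ (Finset.card_le_card hiu) (fun c => ?_)
      exact Finset.card_le_card (Finset.filter_subset_filter _ hiu)
    refine ⟨σ ∪ τ, σ ∩ τ, hsub_union, (Finset.inter_subset_left).trans hσ,
      hue, hint, hy, ?_, ?_, ?_⟩
    · rintro ⟨e1, e2⟩; exact h1 (by rwa [e1, e2] at hy)
    · rintro ⟨e1, e2⟩; exact h2 (by rwa [e1, e2] at hy)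
    · intro i
      by_cases hi1 : i ∈ σ <;> by_cases hi2 : i ∈ τ <;>
        simp [ind, Finset.mem_union, Finset.mem_inter, hi1, hi2]
  · -- intersection has odd cardinality: move the max of the symmetric difference
    have hne : σ ≠ τ := by
      rintro rfl
      simp only [Finset.inter_self] at hint
      exact hint hσe
    have hΔne : (σ ∆ τ).Nonempty := by
      rw [Finset.nonempty_iff_ne_empty]
      intro h
      exact hne (symmDiff_eq_bot.mp h)
    set m := (σ ∆ τ).max' hΔne with hm
    have hmΔ : m ∈ σ ∆ τ := Finset.max'_mem _ _
    have hΔeq : σ ∆ τ = (σ ∪ τ) \ (σ ∩ τ) := by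
      rw [symmDiff_eq_sup_sdiff_inf]; rfl
    have hΔcard : (σ ∆ τ).card = (σ ∪ τ).card - (σ ∩ τ).card := by
      rw [hΔeq, Finset.card_sdiff_of_subset hiu]
    have hule : (σ ∩ τ).card ≤ (σ ∪ τ).card := Finset.card_le_card hiu
    have huo : ¬ Even (σ ∪ τ).card := fun h => hint ((Nat.even_add.mp hsum).mp h)
    have hΔeven : Even (σ ∆ τ).card := by
      rw [hΔcard]
      rw [Nat.even_sub hule]
      constructor <;> intro h <;> [exact absurd h huo; exact absurd h hint]
    have hΔ2 : 2 ≤ (σ ∆ τ).card := by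
      obtain ⟨k, hk⟩ := hΔeven
      have := Finset.card_pos.mpr hΔne
      omega
    -- pick another element x of the symmetric difference
    have hx : ((σ ∆ τ).erase m).Nonempty := by
      rw [← Finset.card_pos, Finset.card_erase_of_mem hmΔ]
      omega
    obtain ⟨x, hxmem⟩ := hx
    have hxm : x ≠ m := Finset.ne_of_mem_erase hxmem
    have hxΔ : x ∈ σ ∆ τ := Finset.mem_of_mem_erase hxmem
    have hxlt : x < m := lt_of_le_of_ne (Finset.le_max' _ _ hxΔ) hxm
    have hmem_of_Δ : ∀ y, y ∈ σ ∆ τ → y ∈ σ ∪ τ ∧ y ∉ σ ∩ τ := by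
      intro y hy
      rw [hΔeq, Finset.mem_sdiff] at hy
      exact hy
    obtain ⟨hmu, hmi⟩ := hmem_of_Δ m hmΔ
    obtain ⟨hxu, hxi⟩ := hmem_of_Δ x hxΔ
    set σ' := (σ ∪ τ).erase m with hσ'
    set τ' := insert m (σ ∩ τ) with hτ'
    have hσ'card : σ'.card = (σ ∪ τ).card - 1 := Finset.card_erase_of_mem hmu
    have hτ'card : τ'.card = (σ ∩ τ).card + 1 := Finset.card_insert_of_notMem hmi
    have hσ'e : Even σ'.card := by
      rw [hσ'card, Nat.even_sub (by have := Finset.card_pos.mpr ⟨m, hmu⟩; omega)]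
      simp only [Nat.even_add_one, Nat.not_even_iff_odd]
      constructor <;> intro h
      · exact absurd h huo
      · exact absurd (by simpa using Nat.Odd.sub_odd h odd_one) (by simpa using h)
    have hτ'e : Even τ'.card := by
      rw [hτ'card, Nat.even_add_one]
      exact hint
    have hy : youngGE σ' τ' := by
      refine youngGE_of_counts _ _ ?_ (fun c => ?_)
      · rw [hσ'card, hτ'card]; omega
      · by_cases hc : m ≤ c
        · have hsub1 : τ'.filter (fun y => y ≤ c) ⊆
              insert m ((σ ∩ τ).filter (fun y => y ≤ c)) := by
            intro y hy
            simp only [hτ', Finset.mem_filter, Finset.mem_insert] at hy ⊢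
            tauto
          have hxnot : x ∉ (σ ∩ τ).filter (fun y => y ≤ c) := by
            simp only [Finset.mem_filter]
            tauto
          have hsub2 : insert x ((σ ∩ τ).filter (fun y => y ≤ c)) ⊆
              σ'.filter (fun y => y ≤ c) := by
            intro y hy
            simp only [Finset.mem_insert, Finset.mem_filter] at hy
            simp only [hσ', Finset.mem_filter, Finset.mem_erase]
            rcases hy with rfl | ⟨hy1, hy2⟩
            · exact ⟨⟨hxm, hxu⟩, le_trans (le_of_lt hxlt) hc⟩
            · exact ⟨⟨fun h => hmi (h ▸ hy1), hiu hy1⟩, hy2⟩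
          calc (τ'.filter (fun y => y ≤ c)).card
              ≤ (insert m ((σ ∩ τ).filter (fun y => y ≤ c))).card :=
                Finset.card_le_card hsub1
            _ ≤ ((σ ∩ τ).filter (fun y => y ≤ c)).card + 1 :=
                Finset.card_insert_le _ _
            _ = (insert x ((σ ∩ τ).filter (fun y => y ≤ c))).card :=
                (Finset.card_insert_of_notMem hxnot).symm
            _ ≤ _ := Finset.card_le_card hsub2
        · push_neg at hc
          refine Finset.card_le_card (fun y hy => ?_)
          simp only [hτ', Finset.mem_filter, Finset.mem_insert] at hy
          simp only [hσ', Finset.mem_filter, Finset.mem_erase]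
          rcases hy with ⟨rfl | hy1, hy2⟩
          · omega
          · exact ⟨⟨fun h => hmi (h ▸ hy1), hiu hy1⟩, hy2⟩
    refine ⟨σ', τ', (Finset.erase_subset _ _).trans hsub_union,
      Finset.insert_subset (hsub_union hmu) ((Finset.inter_subset_left).trans hσ),
      hσ'e, hτ'e, hy, ?_, ?_, ?_⟩
    · rintro ⟨e1, e2⟩; exact h1 (by rwa [e1, e2] at hy)
    · rintro ⟨e1, e2⟩; exact h2 (by rwa [e1, e2] at hy)
    · intro i
      have hmor : m ∈ σ ∨ m ∈ τ := by simpa [Finset.mem_union] using hmu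
      have hmnand : ¬(m ∈ σ ∧ m ∈ τ) := by simpa [Finset.mem_inter] using hmi
      by_cases hi3 : i = m
      · subst hi3
        rcases hmor with h | h
        · have h' : m ∉ τ := fun hh => hmnand ⟨h, hh⟩
          simp [ind, hσ', hτ', h, h']
        · have h' : m ∉ σ := fun hh => hmnand ⟨hh, h⟩
          simp [ind, hσ', hτ', h, h']
      · by_cases hi1 : i ∈ σ <;> by_cases hi2 : i ∈ τ <;>
          simp [ind, hσ', hτ', Finset.mem_erase, Finset.mem_insert, Finset.mem_union,
            Finset.mem_inter, hi1, hi2, hi3]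
end

section
/- Paths partition for even subsets of tree leaves: let T be a finite tree all of whose internal vertices have degree 3 and whose leaves are labeled bijectively by [n]. For every even subset B ⊆ [n] there exists a unique perfect matching μ of B such that the paths in T connecting the pairs of μ are pairwise edge-disjoint. -/
open Finset

/-- `μ` is a perfect matching of the even subset `B ⊆ [n]`: every pair in `μ` consists of two
elements of `B` (written in increasing order), and every element of `B` lies in exactly one
pair of `μ`. -/
def IsMatchingOf {n : ℕ} (B : Finset (Fin n)) (μ : Finset (Fin n × Fin n)) : Prop :=
  (∀ q ∈ μ, q.1 < q.2 ∧ q.1 ∈ B ∧ q.2 ∈ B) ∧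
    ∀ b ∈ B, ∃! q, q ∈ μ ∧ (b = q.1 ∨ b = q.2)

/-- The paths in `G` joining the leaves labelled by the pairs of `μ` are pairwise
edge-disjoint. -/
def PathsEdgeDisjoint {V : Type*} {n : ℕ} (G : SimpleGraph V) (leaf : Fin n → V)
    (μ : Finset (Fin n × Fin n)) : Prop :=
  ∀ q ∈ μ, ∀ q' ∈ μ, q ≠ q' →
    ∀ (P : G.Path (leaf q.1) (leaf q.2)) (P' : G.Path (leaf q'.1) (leaf q'.2)),
      ∀ e, e ∈ P.1.edges → e ∉ P'.1.edges

/-!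
Call an edge of `T` odd if deleting it leaves an odd number of leaves of `B` on each side. The
number of pairs of a perfect matching of `B` whose path crosses a given edge has the parity of the
number of `B`-leaves on one side of it. So if the paths are edge-disjoint, every edge on one of
them is crossed exactly once and is odd: the paths run inside the forest `F` of odd edges.
In `F` a leaf has degree one if it is in `B` and zero otherwise, and any other vertex has even
degree, hence degree `0` or `2` as `T` is trivalent. Thus the nontrivial components of `F` are paths
whose two ends are leaves of `B`; the matching must pair the two ends of each, and this matching
does have edge-disjoint paths, the components being disjoint.
-/

section Matching

variable {n : ℕ} {B : Finset (Fin n)} {μ ν : Finset (Fin n × Fin n)}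

lemma IsMatchingOf.eq_of_mem (hμ : IsMatchingOf B μ) {q q' : Fin n × Fin n} {b : Fin n}
    (hq : q ∈ μ) (hq' : q' ∈ μ) (hb : b = q.1 ∨ b = q.2) (hb' : b = q'.1 ∨ b = q'.2) :
    q = q' := by
  have hbB : b ∈ B := by rcases hb with rfl | rfl <;> simp [hμ.1 q hq]
  exact (hμ.2 b hbB).unique ⟨hq, hb⟩ ⟨hq', hb'⟩

lemma IsMatchingOf.eq_of_subset (hμ : IsMatchingOf B μ) (hν : IsMatchingOf B ν) (h : μ ⊆ ν) :
    μ = ν := by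
  refine h.antisymm fun q hq => ?_
  obtain ⟨r, ⟨hr, hqr⟩, -⟩ := hμ.2 q.1 (hν.1 q hq).2.1
  rwa [hν.eq_of_mem hq (h hr) (.inl rfl) hqr]

lemma IsMatchingOf.sum_eq_sum_pairs {M : Type*} [AddCommMonoid M] (hμ : IsMatchingOf B μ)
    (f : Fin n → M) : ∑ b ∈ B, f b = ∑ q ∈ μ, (f q.1 + f q.2) := by
  classical
  have hB : B = μ.biUnion fun q => {q.1, q.2} := by
    ext b
    simp only [mem_biUnion, mem_insert, mem_singleton]
    refine ⟨fun hb => ?_, ?_⟩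
    · obtain ⟨q, ⟨hq, hbq⟩, -⟩ := hμ.2 b hb
      exact ⟨q, hq, hbq⟩
    · rintro ⟨q, hq, rfl | rfl⟩ <;> simp [hμ.1 q hq]
  rw [hB, sum_biUnion]
  · exact sum_congr rfl fun q hq => sum_pair (hμ.1 q hq).1.ne
  · intro q hq q' hq' hne
    simp only [Function.onFun, disjoint_left, mem_insert, mem_singleton]
    exact fun b hb hb' => hne (hμ.eq_of_mem hq hq' hb hb')

lemma IsMatchingOf.card_filter_not_iff_mod_two (hμ : IsMatchingOf B μ) (S : Fin n → Prop)
    [DecidablePred S] : (#{q ∈ μ | ¬(S q.1 ↔ S q.2)} : ZMod 2) = #{b ∈ B | S b} := by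
  rw [natCast_card_filter, natCast_card_filter, hμ.sum_eq_sum_pairs]
  refine sum_congr rfl fun q _ => ?_
  by_cases h1 : S q.1 <;> by_cases h2 : S q.2 <;> simp [h1, h2]
  decide

open Classical in
noncomputable def partnerMatching (B : Finset (Fin n)) (R : Fin n → Fin n → Prop) :
    Finset (Fin n × Fin n) :=
  {q | q.1 < q.2 ∧ q.1 ∈ B ∧ q.2 ∈ B ∧ R q.1 q.2}

variable {R : Fin n → Fin n → Prop}

lemma mem_partnerMatching {q : Fin n × Fin n} :
    q ∈ partnerMatching B R ↔ q.1 < q.2 ∧ q.1 ∈ B ∧ q.2 ∈ B ∧ R q.1 q.2 := by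
  simp [partnerMatching]

lemma isMatchingOf_partnerMatching (hsymm : ∀ i j, R i j → R j i)
    (hR : ∀ i ∈ B, ∃! j, j ≠ i ∧ j ∈ B ∧ R i j) : IsMatchingOf B (partnerMatching B R) := by
  refine ⟨fun q hq => (mem_partnerMatching.mp hq).imp_right fun h => ⟨h.1, h.2.1⟩,
    fun b hb => ?_⟩
  obtain ⟨j, ⟨hjb, hj, hbj⟩, huniq⟩ := hR b hb
  have hpair : ∀ q ∈ partnerMatching B R, (b = q.1 ∨ b = q.2) → q = (min b j, max b j) := by
    rintro ⟨x, y⟩ hq hbq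
    obtain ⟨hxy, hx, hy, hrxy⟩ := mem_partnerMatching.mp hq
    rcases hbq with rfl | rfl
    · obtain rfl := huniq y ⟨hxy.ne', hy, hrxy⟩
      simp [hxy.le]
    · obtain rfl := huniq x ⟨hxy.ne, hx, hsymm _ _ hrxy⟩
      simp [hxy.le]
  refine ⟨(min b j, max b j), ⟨mem_partnerMatching.mpr ?_, ?_⟩,
    fun q ⟨hq, hbq⟩ => hpair q hq hbq⟩
  · rcases lt_or_gt_of_ne hjb with h | h
    · simp [h.le, h, hj, hb, hsymm _ _ hbj]
    · simp [h.le, h, hj, hb, hbj]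
  · rcases le_total b j with h | h <;> simp [h]

lemma partnerMatching_eq_of_rel (hsymm : ∀ i j, R i j → R j i)
    (hR : ∀ i ∈ B, ∃! j, j ≠ i ∧ j ∈ B ∧ R i j) {q q' : Fin n × Fin n}
    (hq : q ∈ partnerMatching B R) (hq' : q' ∈ partnerMatching B R) (h : R q.1 q'.1) :
    q = q' := by
  obtain ⟨hlt, h1, h2, hr⟩ := mem_partnerMatching.mp hq
  have hq'1 : q'.1 = q.1 ∨ q'.1 = q.2 := by
    refine or_iff_not_imp_left.mpr fun hne => (hR q.1 h1).unique ⟨hne, ?_, h⟩ ⟨hlt.ne', h2, hr⟩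
    exact (mem_partnerMatching.mp hq').2.1
  exact (isMatchingOf_partnerMatching hsymm hR).eq_of_mem hq hq' hq'1 (.inl rfl)

end Matching

namespace SimpleGraph

variable {V : Type*} {G : SimpleGraph V} {u v w x y : V}

lemma IsTree.card_degree_eq_one_of_degree_le_two [Fintype V] [Nontrivial V] [DecidableRel G.Adj]
    (hG : G.IsTree) (hdeg : ∀ v, G.degree v ≤ 2) : #{v | G.degree v = 1} = 2 := by
  have hpos := hG.connected.preconnected.minDegree_pos_of_nontrivial
  have hsum := G.sum_degrees_eq_twice_card_edges
  have hcard := hG.card_edgeFinset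
  -- `#E + 1 = #V` and the handshake lemma give `∑ v, (2 - deg v) = 2`, with each summand 0 or 1
  have hpt : ∀ v, (if G.degree v = 1 then 1 else 0) + G.degree v = 2 := fun v => by
    have := G.minDegree_le_degree v
    have := hdeg v
    split_ifs <;> omega
  have := sum_congr rfl fun v (_ : v ∈ (univ : Finset V)) => hpt v
  rw [sum_add_distrib, ← card_filter, hsum, sum_const, card_univ, smul_eq_mul] at this
  omega

lemma IsAcyclic.existsUnique_reachable_degree_eq_one [Fintype V] [DecidableRel G.Adj]
    (hG : G.IsAcyclic) (hdeg : ∀ v, G.degree v ≤ 2) {a : V} (ha : G.degree a = 1) :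
    ∃! b, b ≠ a ∧ G.degree b = 1 ∧ G.Reachable a b := by
  classical
  set C := G.connectedComponentMk a
  have hmem : ∀ {v}, v ∈ C.supp ↔ G.Reachable a v := fun {v} => by
    rw [ConnectedComponent.mem_supp_iff, ConnectedComponent.eq]; exact reachable_comm
  have hdegC : ∀ v : C.supp, (G.induce C.supp).degree v = G.degree v := fun v =>
    degree_induce_of_neighborSet_subset fun w hw => (C.mem_supp_congr_adj hw).mp v.2
  have hC : (G.induce C.supp).IsTree := hG.isTree_connectedComponent C
  set a₀ : C.supp := ⟨a, hmem.mpr .rfl⟩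
  obtain ⟨a', ha'⟩ := (G.degree_pos_iff_exists_adj a).mp (by omega)
  have : Nontrivial C.supp :=
    ⟨a₀, ⟨a', hmem.mpr ha'.reachable⟩, fun h => ha'.ne (congrArg Subtype.val h)⟩
  have htwo := hC.card_degree_eq_one_of_degree_le_two fun v => hdegC v ▸ hdeg v
  simp only [hdegC] at htwo
  obtain ⟨b₀, hb₀⟩ := card_eq_one.mp <| (card_erase_of_mem (s := {v : C.supp | G.degree v = 1})
    (a := a₀) (by simpa using ha)).trans (by rw [htwo])
  have hS : ∀ v : C.supp, v ≠ a₀ ∧ G.degree v = 1 ↔ v = b₀ := fun v => by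
    simpa using congrArg (v ∈ ·) hb₀
  refine ⟨b₀, ?_, fun c ⟨hca, hc, hac⟩ => ?_⟩
  · obtain ⟨hne, hdeg⟩ := (hS b₀).mpr rfl
    exact ⟨fun h => hne (Subtype.ext h), hdeg, hmem.mp b₀.2⟩
  · have := (hS ⟨c, hmem.mpr hac⟩).mp ⟨fun h => hca (congrArg Subtype.val h), hc⟩
    exact congrArg Subtype.val this

lemma IsTree.reachable_deleteEdges_iff_not (hG : G.IsTree) (h : G.Adj u v) (x : V) :
    (G.deleteEdges {s(u, v)}).Reachable x v ↔ ¬ (G.deleteEdges {s(u, v)}).Reachable x u := by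
  refine ⟨fun hv hu => isAcyclic_iff_forall_adj_isBridge.mp hG.isAcyclic h (hu.symm.trans hv),
    fun hu => ?_⟩
  classical
  obtain ⟨P, hP⟩ := hG.connected.exists_isPath x u
  by_cases he : s(u, v) ∈ P.edges
  · have hv := P.snd_mem_support_of_mem_edges he
    have hu' := Walk.endpoint_notMem_support_takeUntil hP hv h.ne
    exact reachable_deleteEdges_iff_exists_walk.mpr
      ⟨P.takeUntil v hv, fun he' => hu' (Walk.fst_mem_support_of_mem_edges _ he')⟩
  · exact absurd (reachable_deleteEdges_iff_exists_walk.mpr ⟨P, he⟩) hu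

lemma IsTree.reachable_deleteEdges_iff (hG : G.IsTree) (h : G.Adj u v) :
    (G.deleteEdges {s(u, v)}).Reachable x y ↔
      ((G.deleteEdges {s(u, v)}).Reachable x u ↔ (G.deleteEdges {s(u, v)}).Reachable y u) := by
  have hx := hG.reachable_deleteEdges_iff_not h x
  have hy := hG.reachable_deleteEdges_iff_not h y
  refine ⟨fun hxy => ⟨hxy.symm.trans, hxy.trans⟩, fun hxy => ?_⟩
  by_cases hxu : (G.deleteEdges {s(u, v)}).Reachable x u
  · exact hxu.trans (hxy.mp hxu).symm
  · exact (hx.mpr hxu).trans (hy.mpr (hxy.not.mp hxu)).symm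

lemma IsAcyclic.mem_edges_iff_not_reachable_deleteEdges (hG : G.IsAcyclic) {p : G.Walk x y}
    (hp : p.IsPath) : s(u, v) ∈ p.edges ↔ ¬ (G.deleteEdges {s(u, v)}).Reachable x y := by
  classical
  refine ⟨fun he hr => ?_, p.mem_edges_of_not_reachable_deleteEdges⟩
  obtain ⟨q, hq⟩ := reachable_deleteEdges_iff_exists_walk.mp hr
  have hpq : p = q.toPath := congrArg Subtype.val <| (hG.subsingleton_path x y).elim ⟨p, hp⟩ _
  exact hq (q.edges_toPath_subset_edges (hpq ▸ he))

lemma IsTree.reachable_deleteEdges_iff_eq_penultimate (hG : G.IsTree) {p : G.Walk x v}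
    (hp : p.IsPath) (h : G.Adj u v) :
    (G.deleteEdges {s(u, v)}).Reachable x u ↔ u = p.penultimate := by
  rw [iff_not_comm.mp (hG.reachable_deleteEdges_iff_not h x),
    ← hG.isAcyclic.mem_edges_iff_not_reachable_deleteEdges hp]
  refine ⟨fun he => hp.eq_penultimate_of_mem_edges (Sym2.eq_swap ▸ he), ?_⟩
  rintro rfl
  refine p.mk_penultimate_end_mem_edges fun hnil => ?_
  cases hnil
  exact h.ne rfl

lemma reachable_deleteEdges_iff_of_forall_adj_eq (hw : ∀ c, G.Adj x c → c = w) :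
    (G.deleteEdges {s(x, w)}).Reachable y x ↔ y = x := by
  refine ⟨fun ⟨p⟩ => ?_, fun h => h ▸ .rfl⟩
  cases p.reverse with
  | nil => rfl
  | cons hadj _ =>
    rw [deleteEdges_adj] at hadj
    exact absurd (by rw [hw _ hadj.1]; exact Set.mem_singleton _) hadj.2

lemma IsAcyclic.reachable_of_mem_edges (hG : G.IsAcyclic) {H : SimpleGraph V} (hle : H ≤ G)
    (hr : H.Reachable x y) {p : G.Walk x y} (hp : p.IsPath) (he : s(u, v) ∈ p.edges) :
    H.Reachable x u := by
  classical
  obtain ⟨q⟩ := hr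
  have hq : ∀ e ∈ q.bypass.edges, e ∈ G.edgeSet := fun e he =>
    edgeSet_mono hle (q.bypass.edges_subset_edgeSet he)
  have hpq : p = q.bypass.transfer G hq := congrArg Subtype.val <|
    (hG.subsingleton_path x y).elim ⟨p, hp⟩ ⟨_, q.bypass_isPath.transfer hq⟩
  rw [hpq, Walk.edges_transfer] at he
  exact ⟨q.bypass.takeUntil u (q.bypass.fst_mem_support_of_mem_edges he)⟩

lemma IsAcyclic.pathsEdgeDisjoint_partnerMatching {n : ℕ} {leaf : Fin n → V}
    {B : Finset (Fin n)} (hG : G.IsAcyclic) {H : SimpleGraph V} (hle : H ≤ G)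
    (hR : ∀ i ∈ B, ∃! j, j ≠ i ∧ j ∈ B ∧ H.Reachable (leaf i) (leaf j)) :
    PathsEdgeDisjoint G leaf (partnerMatching B fun i j => H.Reachable (leaf i) (leaf j)) := by
  intro q hq q' hq' hne P P' e he he'
  induction e using Sym2.ind with
  | _ u v =>
    have hreach : ∀ {r}, r ∈ partnerMatching B (fun i j => H.Reachable (leaf i) (leaf j)) →
        ∀ P : G.Path (leaf r.1) (leaf r.2), s(u, v) ∈ P.1.edges → H.Reachable (leaf r.1) u :=
      fun hr P he => hG.reachable_of_mem_edges hle (mem_partnerMatching.mp hr).2.2.2 P.2 he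
    exact hne <| partnerMatching_eq_of_rel (fun _ _ h => h.symm) hR hq hq'
      ((hreach hq P he).trans (hreach hq' P' he').symm)

section OddEdges

variable {n : ℕ} {leaf : Fin n → V} {B : Finset (Fin n)}

open Classical in
noncomputable def leafSideCount (G : SimpleGraph V) (leaf : Fin n → V) (B : Finset (Fin n))
    (u v : V) : ℕ :=
  #{i ∈ B | (G.deleteEdges {s(u, v)}).Reachable (leaf i) u}

/-- Both sides are required to be odd so that the relation is symmetric by definition; when `#B`
is even, one side suffices (`IsTree.oddEdgeGraph_adj`). -/
def oddEdgeGraph (G : SimpleGraph V) (leaf : Fin n → V) (B : Finset (Fin n)) :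
    SimpleGraph V where
  Adj u v := G.Adj u v ∧ Odd (leafSideCount G leaf B u v) ∧ Odd (leafSideCount G leaf B v u)
  symm := ⟨fun _ _ h => ⟨h.1.symm, h.2.2, h.2.1⟩⟩
  loopless := ⟨fun v h => G.loopless.irrefl v h.1⟩

lemma oddEdgeGraph_le : oddEdgeGraph G leaf B ≤ G := fun _ _ h => h.1

lemma IsTree.leafSideCount_add (hT : G.IsTree) (h : G.Adj u v) :
    leafSideCount G leaf B u v + leafSideCount G leaf B v u = #B := by
  classical
  unfold leafSideCount
  rw [← card_filter_add_card_filter_not (s := B)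
    (fun i => (G.deleteEdges {s(u, v)}).Reachable (leaf i) u), Sym2.eq_swap (a := v)]
  congr 2
  exact filter_congr fun i _ => hT.reachable_deleteEdges_iff_not h _

lemma IsTree.odd_leafSideCount_comm (hT : G.IsTree) (hB : Even #B) (h : G.Adj u v) :
    Odd (leafSideCount G leaf B v u) ↔ Odd (leafSideCount G leaf B u v) := by
  have := hT.leafSideCount_add (leaf := leaf) (B := B) h ▸ hB
  rw [Nat.even_add] at this
  simp only [← Nat.not_even_iff_odd, this]

lemma IsTree.oddEdgeGraph_adj (hT : G.IsTree) (hB : Even #B) :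
    (oddEdgeGraph G leaf B).Adj u v ↔ G.Adj u v ∧ Odd (leafSideCount G leaf B u v) :=
  ⟨fun h => ⟨h.1, h.2.1⟩, fun h => ⟨h.1, h.2, (hT.odd_leafSideCount_comm hB h.1).mpr h.2⟩⟩

lemma IsTree.card_crossing_eq_leafSideCount_mod_two (hT : G.IsTree) {μ : Finset (Fin n × Fin n)}
    (hμ : IsMatchingOf B μ) (h : G.Adj u v) [DecidablePred fun q : Fin n × Fin n =>
      ¬ (G.deleteEdges {s(u, v)}).Reachable (leaf q.1) (leaf q.2)] :
    (#{q ∈ μ | ¬ (G.deleteEdges {s(u, v)}).Reachable (leaf q.1) (leaf q.2)} : ZMod 2) =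
      leafSideCount G leaf B u v := by
  classical
  rw [leafSideCount, ← hμ.card_filter_not_iff_mod_two]
  exact congrArg _ <| congrArg _ <| filter_congr fun q _ =>
    not_congr (hT.reachable_deleteEdges_iff h)

lemma leafSideCount_of_forall_adj_eq (hinj : Function.Injective leaf) {i : Fin n} {w : V}
    (hw : ∀ c, G.Adj (leaf i) c → c = w) :
    leafSideCount G leaf B (leaf i) w = if i ∈ B then 1 else 0 := by
  classical
  unfold leafSideCount
  rw [filter_congr (q := fun j => j = i) fun j _ =>
    (reachable_deleteEdges_iff_of_forall_adj_eq hw).trans hinj.eq_iff, filter_eq']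
  split_ifs <;> rfl

lemma IsTree.oddEdgeGraph_adj_of_mem_edges (hT : G.IsTree) (hB : Even #B)
    {μ : Finset (Fin n × Fin n)} (hμ : IsMatchingOf B μ) (hdisj : PathsEdgeDisjoint G leaf μ)
    {q : Fin n × Fin n} (hq : q ∈ μ) (P : G.Path (leaf q.1) (leaf q.2))
    (he : s(u, v) ∈ P.1.edges) : (oddEdgeGraph G leaf B).Adj u v := by
  classical
  have h := P.1.adj_of_mem_edges he
  have hcross : {r ∈ μ | ¬ (G.deleteEdges {s(u, v)}).Reachable (leaf r.1) (leaf r.2)} = {q} := by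
    refine eq_singleton_iff_unique_mem.mpr ⟨?_, fun r hr => ?_⟩
    · simp only [mem_filter]
      exact ⟨hq, (hT.isAcyclic.mem_edges_iff_not_reachable_deleteEdges P.2).mp he⟩
    simp only [mem_filter] at hr
    by_contra hrq
    obtain ⟨p, hp⟩ := hT.connected.exists_isPath (leaf r.1) (leaf r.2)
    exact hdisj q hq r hr.1 (Ne.symm hrq) P ⟨p, hp⟩ _ he
      (p.mem_edges_of_not_reachable_deleteEdges hr.2)
  have hodd := hT.card_crossing_eq_leafSideCount_mod_two (leaf := leaf) hμ h
  rw [hcross, card_singleton, Nat.cast_one, eq_comm, ZMod.natCast_eq_one_iff_odd] at hodd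
  exact (hT.oddEdgeGraph_adj hB).mpr ⟨h, hodd⟩

lemma IsTree.subset_partnerMatching (hT : G.IsTree) (hB : Even #B)
    {μ : Finset (Fin n × Fin n)} (hμ : IsMatchingOf B μ) (hdisj : PathsEdgeDisjoint G leaf μ) :
    μ ⊆ partnerMatching B fun i j => (oddEdgeGraph G leaf B).Reachable (leaf i) (leaf j) := by
  intro q hq
  obtain ⟨hlt, h1, h2⟩ := hμ.1 q hq
  obtain ⟨p, hp⟩ := hT.connected.exists_isPath (leaf q.1) (leaf q.2)
  refine mem_partnerMatching.mpr ⟨hlt, h1, h2, ⟨p.transfer _ fun e he => ?_⟩⟩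
  induction e using Sym2.ind with
  | _ u v => exact hT.oddEdgeGraph_adj_of_mem_edges hB hμ hdisj hq ⟨p, hp⟩ he

variable [Fintype V] [DecidableRel G.Adj]

lemma IsTree.sum_leafSideCount_neighborFinset (hT : G.IsTree) (hv : v ∉ Set.range leaf) :
    ∑ w ∈ G.neighborFinset v, leafSideCount G leaf B w v = #B := by
  classical
  -- `leaf i` lies on the `w`-side of the edge `vw` iff `w` is the last vertex before `v` on the
  -- path from `leaf i` to `v`
  choose p hp using fun i => hT.connected.exists_isPath (leaf i) v
  have hnil : ∀ i, ¬ (p i).Nil := fun i h => hv ⟨i, h.eq⟩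
  have hmaps : ∀ i ∈ B, (p i).penultimate ∈ G.neighborFinset v := fun i _ =>
    (mem_neighborFinset _ _ _).mpr (Walk.adj_penultimate (hnil i)).symm
  rw [card_eq_sum_card_fiberwise hmaps]
  refine sum_congr rfl fun w hw => ?_
  rw [leafSideCount]
  congr 1
  ext i
  simp only [mem_filter]
  rw [eq_comm,
    hT.reachable_deleteEdges_iff_eq_penultimate (hp i) ((mem_neighborFinset _ _ _).mp hw).symm]

variable [DecidableRel (oddEdgeGraph G leaf B).Adj]

lemma IsTree.neighborFinset_oddEdgeGraph (hT : G.IsTree) (hB : Even #B) (v : V) :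
    (oddEdgeGraph G leaf B).neighborFinset v =
      {w ∈ G.neighborFinset v | Odd (leafSideCount G leaf B w v)} := by
  ext w
  rw [mem_filter, mem_neighborFinset, mem_neighborFinset, (oddEdgeGraph G leaf B).adj_comm,
    hT.oddEdgeGraph_adj hB, G.adj_comm]

lemma IsTree.degree_oddEdgeGraph_leaf (hT : G.IsTree) (hB : Even #B)
    (hinj : Function.Injective leaf) {i : Fin n} (hi : G.degree (leaf i) = 1) :
    (oddEdgeGraph G leaf B).degree (leaf i) = if i ∈ B then 1 else 0 := by
  obtain ⟨w, hw⟩ := card_eq_one.mp hi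
  have hadj : ∀ c, G.Adj (leaf i) c → c = w := fun c hc =>
    mem_singleton.mp (hw ▸ (mem_neighborFinset _ _ _).mpr hc)
  have hwi : G.Adj w (leaf i) := ((mem_neighborFinset _ _ _).mp (hw ▸ mem_singleton_self w)).symm
  rw [← card_neighborFinset_eq_degree, hT.neighborFinset_oddEdgeGraph hB, hw, filter_singleton]
  simp only [← hT.odd_leafSideCount_comm hB hwi, leafSideCount_of_forall_adj_eq hinj hadj]
  split_ifs <;> simp_all

lemma IsTree.even_degree_oddEdgeGraph (hT : G.IsTree) (hB : Even #B) (hv : v ∉ Set.range leaf) :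
    Even ((oddEdgeGraph G leaf B).degree v) := by
  have hodd : ∀ k : ℕ, ((if Odd k then 1 else 0 : ℕ) : ZMod 2) = k := fun k => by
    split_ifs with h
    · exact (ZMod.natCast_eq_one_iff_odd.mpr h).symm
    · exact (ZMod.natCast_eq_zero_iff_even.mpr (Nat.not_odd_iff_even.mp h)).symm
  rw [← ZMod.natCast_eq_zero_iff_even, ← card_neighborFinset_eq_degree,
    hT.neighborFinset_oddEdgeGraph hB, card_filter, Nat.cast_sum]
  simp only [hodd]
  rw [← Nat.cast_sum, hT.sum_leafSideCount_neighborFinset hv, ZMod.natCast_eq_zero_iff_even]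
  exact hB

lemma IsTree.degree_oddEdgeGraph_le_two (hT : G.IsTree) (hB : Even #B)
    (hinj : Function.Injective leaf) (hleaf : ∀ i, G.degree (leaf i) = 1)
    (hdeg : ∀ v, G.degree v ≤ 3) (v : V) : (oddEdgeGraph G leaf B).degree v ≤ 2 := by
  by_cases hv : v ∈ Set.range leaf
  · obtain ⟨i, rfl⟩ := hv
    rw [hT.degree_oddEdgeGraph_leaf hB hinj (hleaf i)]
    split_ifs <;> omega
  · obtain ⟨k, hk⟩ := hT.even_degree_oddEdgeGraph hB hv
    have := (degree_le_of_le (oddEdgeGraph_le (leaf := leaf) (B := B))).trans (hdeg v)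
    omega

lemma IsTree.degree_oddEdgeGraph_eq_one_iff (hT : G.IsTree) (hB : Even #B)
    (hinj : Function.Injective leaf) (hleaf : ∀ i, G.degree (leaf i) = 1) :
    (oddEdgeGraph G leaf B).degree v = 1 ↔ ∃ i ∈ B, leaf i = v := by
  refine ⟨fun h => ?_, fun ⟨i, hi, hiv⟩ => ?_⟩
  · by_cases hv : v ∈ Set.range leaf
    · obtain ⟨i, rfl⟩ := hv
      rw [hT.degree_oddEdgeGraph_leaf hB hinj (hleaf i)] at h
      exact ⟨i, by by_contra hi; simp [hi] at h, rfl⟩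
    · exact absurd (h ▸ hT.even_degree_oddEdgeGraph hB hv) Nat.not_even_one
  · rw [← hiv, hT.degree_oddEdgeGraph_leaf hB hinj (hleaf i), if_pos hi]

lemma IsTree.existsUnique_oddEdgeGraph_partner (hT : G.IsTree) (hB : Even #B)
    (hinj : Function.Injective leaf) (hleaf : ∀ i, G.degree (leaf i) = 1)
    (hdeg : ∀ v, G.degree v ≤ 3) {i : Fin n} (hi : i ∈ B) :
    ∃! j, j ≠ i ∧ j ∈ B ∧ (oddEdgeGraph G leaf B).Reachable (leaf i) (leaf j) := by
  have hone := fun v => hT.degree_oddEdgeGraph_eq_one_iff (v := v) hB hinj hleaf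
  obtain ⟨b, ⟨hbi, hb, hib⟩, huniq⟩ :=
    (hT.isAcyclic.anti oddEdgeGraph_le).existsUnique_reachable_degree_eq_one
      (hT.degree_oddEdgeGraph_le_two hB hinj hleaf hdeg) ((hone _).mpr ⟨i, hi, rfl⟩)
  obtain ⟨j, hj, rfl⟩ := (hone _).mp hb
  refine ⟨j, ⟨fun h => hbi (h ▸ rfl), hj, hib⟩, fun k ⟨hki, hk, hik⟩ => hinj ?_⟩
  exact huniq _ ⟨hinj.ne hki, (hone _).mpr ⟨k, hk, rfl⟩, hik⟩

end OddEdges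

end SimpleGraph

open SimpleGraph

theorem stmt18_general {V : Type*} [Fintype V] (G : SimpleGraph V)
    [DecidableRel G.Adj] (hT : G.IsTree)
    (hdeg : ∀ v : V, G.degree v = 1 ∨ G.degree v = 3)
    (n : ℕ) (leaf : Fin n → V) (hleaf1 : ∀ i, G.degree (leaf i) = 1)
    (hinj : Function.Injective leaf)
    (B : Finset (Fin n)) (hB : Even B.card) :
    ∃! μ : Finset (Fin n × Fin n),
      IsMatchingOf B μ ∧ PathsEdgeDisjoint G leaf μ := by
  classical
  have hdeg3 : ∀ v, G.degree v ≤ 3 := fun v => by rcases hdeg v with h | h <;> omega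
  have hpartner := fun i (hi : i ∈ B) =>
    hT.existsUnique_oddEdgeGraph_partner hB hinj hleaf1 hdeg3 hi
  have hmatch := isMatchingOf_partnerMatching (fun _ _ h => h.symm) hpartner
  exact ⟨_, ⟨hmatch, hT.isAcyclic.pathsEdgeDisjoint_partnerMatching oddEdgeGraph_le hpartner⟩,
    fun μ ⟨hμ, hdisj⟩ => hμ.eq_of_subset hmatch (hT.subset_partnerMatching hB hμ hdisj)⟩

/-- let `T` be a finite tree all of whose vertices have degree `1` or `3`,
with leaves (the degree-`1` vertices) labelled bijectively by `[n]`. Then every even subset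
`B ⊆ [n]` admits a unique perfect matching `μ` whose connecting paths in `T` are pairwise
edge-disjoint. -/
theorem stmt18 {V : Type*} [Fintype V] [DecidableEq V] (G : SimpleGraph V)
    [DecidableRel G.Adj] (hT : G.IsTree)
    (hdeg : ∀ v : V, G.degree v = 1 ∨ G.degree v = 3)
    (n : ℕ) (leaf : Fin n → V) (hleaf1 : ∀ i, G.degree (leaf i) = 1)
    (hinj : Function.Injective leaf)
    (hsurj : ∀ v : V, G.degree v = 1 → ∃ i, leaf i = v)
    (B : Finset (Fin n)) (hB : Even B.card) :
    ∃! μ : Finset (Fin n × Fin n),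
      IsMatchingOf B μ ∧ PathsEdgeDisjoint G leaf μ :=
  stmt18_general G hT hdeg n leaf hleaf1 hinj B hB
end

section
/- Minimality of the disjoint-paths matching: with T a trivalent tree with leaves [n] and metric d given by path length, the unique perfect matching μ of an even subset B whose connecting paths are pairwise edge-disjoint is the (unique) matching minimizing the total length Σ_{(i,j)∈μ} d(i,j) among all perfect matchings of B. -/
open Finset

/-!
Let `c_m(e)` count the pairs of a matching `m` whose tree path uses the edge `e`; the total
length of `m` is then `∑ₑ c_m(e) ℓ(e)`. Deleting `e` cuts the tree in two, and a pair uses `e`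
exactly when its two leaves lie on different sides, so `c_m(e)` has the parity of the number of
points of `B` on one side, whatever `m` is. Edge-disjointness gives `c_μ(e) ≤ 1`, hence
`c_μ ≤ c_ν` edgewise. If equality held everywhere, let the `ν`-path from a leaf `a` leave the
`μ`-path from `a` at a vertex `x`. The exit edge is used by `ν`, hence by some other `μ`-path,
which needs two edges at `x` besides the two of the first `μ`-path: more than a trivalent vertex
has. So `ν ⊆ μ`, and then `ν = μ`.
-/

namespace SimpleGraph

variable {V : Type*} {G : SimpleGraph V}

lemma card_le_degree_of_subset_incidenceSet [Fintype V] [DecidableRel G.Adj] {x : V}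
    {s : Finset (Sym2 V)} (hs : (s : Set (Sym2 V)) ⊆ G.incidenceSet x) : #s ≤ G.degree x := by
  classical
  rw [← card_incidenceFinset_eq_degree]
  exact card_le_card fun e he => (mem_incidenceFinset G x e).2 (hs he)

lemma two_le_degree_of_mem_incidenceSet [Fintype V] [DecidableRel G.Adj] {x : V}
    {e₁ e₂ : Sym2 V} (h₁ : e₁ ∈ G.incidenceSet x) (h₂ : e₂ ∈ G.incidenceSet x) (hne : e₁ ≠ e₂) :
    2 ≤ G.degree x := by
  classical
  simpa [card_pair hne] using
    card_le_degree_of_subset_incidenceSet (s := {e₁, e₂}) (by simp [Set.insert_subset_iff, h₁, h₂])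

namespace Walk

lemma IsTrail.exists_edges_of_mem_support {a b x : V} {w : G.Walk a b} (hw : w.IsTrail)
    (hx : x ∈ w.support) (hxa : x ≠ a) (hxb : x ≠ b) :
    ∃ f₁ ∈ w.edges, ∃ f₂ ∈ w.edges, f₁ ≠ f₂ ∧ x ∈ f₁ ∧ x ∈ f₂ := by
  classical
  have hin := (w.takeUntil x hx).mk_penultimate_end_mem_edges (not_nil_of_ne hxa.symm)
  have hout := (w.dropUntil x hx).mk_start_snd_mem_edges (not_nil_of_ne hxb)
  refine ⟨_, w.edges_takeUntil_subset_edges hx hin, _, w.edges_dropUntil_subset_edges hx hout,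
    fun h => hw.disjoint_edges_takeUntil_dropUntil hx hin (h ▸ hout),
    Sym2.mem_mk_right _ _, Sym2.mem_mk_left _ _⟩

lemma IsTrail.two_le_degree_of_mem_support [Fintype V] [DecidableRel G.Adj] {a b x : V}
    {w : G.Walk a b} (hw : w.IsTrail) (hx : x ∈ w.support) (hxa : x ≠ a) (hxb : x ≠ b) :
    2 ≤ G.degree x := by
  obtain ⟨f₁, h₁, f₂, h₂, hne, hx₁, hx₂⟩ := hw.exists_edges_of_mem_support hx hxa hxb
  exact two_le_degree_of_mem_incidenceSet ⟨w.edges_subset_edgeSet h₁, hx₁⟩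
    ⟨w.edges_subset_edgeSet h₂, hx₂⟩ hne

lemma exists_exit_edge (p : Sym2 V → Prop) :
    ∀ {a b : V} (w : G.Walk a b) {e₀ : Sym2 V}, p e₀ → a ∈ e₀ → (∃ e ∈ w.edges, ¬ p e) →
      ∃ e ∈ w.edges, ¬ p e ∧ ∃ x ∈ e, ∃ e', p e' ∧ x ∈ e'
  | _, _, nil, _, _, _, ⟨_, he, _⟩ => by simp at he
  | a, _, cons (v := c) _ w, e₀, h₀, ha, hout => by
    by_cases hac : p s(a, c)
    · have hout' : ∃ e ∈ w.edges, ¬ p e := by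
        obtain ⟨e, he, hpe⟩ := hout
        rcases List.mem_cons.mp he with rfl | he
        exacts [absurd hac hpe, ⟨e, he, hpe⟩]
      obtain ⟨e, he, hpe, hexit⟩ := exists_exit_edge p w hac (Sym2.mem_mk_right a c) hout'
      exact ⟨e, List.mem_cons_of_mem _ he, hpe, hexit⟩
    · exact ⟨s(a, c), List.mem_cons_self, hac, a, Sym2.mem_mk_left a c, e₀, h₀, ha⟩

end Walk

lemma exists_common_edge_of_degree_le_three [Fintype V] [DecidableRel G.Adj] {x a b u v : V}
    (hx : G.degree x ≤ 3) {P : G.Walk a b} (hP : P.IsTrail) (hxP : x ∈ P.support)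
    (hxa : x ≠ a) (hxb : x ≠ b) {R : G.Walk u v} (hR : R.IsTrail) (hxR : x ∈ R.support)
    (hxu : x ≠ u) (hxv : x ≠ v) : ∃ f ∈ R.edges, f ∈ P.edges := by
  classical
  obtain ⟨f₁, h₁, f₂, h₂, h₁₂, hx₁, hx₂⟩ := hP.exists_edges_of_mem_support hxP hxa hxb
  obtain ⟨g₁, k₁, g₂, k₂, k₁₂, hy₁, hy₂⟩ := hR.exists_edges_of_mem_support hxR hxu hxv
  by_contra! hRP
  have hcard : #{f₁, f₂, g₁, g₂} = 4 := by
    have := hRP g₁ k₁; have := hRP g₂ k₂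
    rw [card_insert_of_notMem (by grind), card_insert_of_notMem (by grind), card_pair k₁₂]
  have := card_le_degree_of_subset_incidenceSet (G := G) (s := {f₁, f₂, g₁, g₂}) (by
    simp only [coe_insert, coe_singleton, Set.insert_subset_iff, Set.singleton_subset_iff]
    exact ⟨⟨P.edges_subset_edgeSet h₁, hx₁⟩, ⟨P.edges_subset_edgeSet h₂, hx₂⟩,
      ⟨R.edges_subset_edgeSet k₁, hy₁⟩, R.edges_subset_edgeSet k₂, hy₂⟩)
  omega

lemma exists_edge_forcing_overlap [Fintype V] [DecidableRel G.Adj] (hdeg : ∀ v, G.degree v ≤ 3)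
    {a j k : V} (ha : G.degree a = 1) (hj : G.degree j = 1) (hk : G.degree k = 1)
    (haj : a ≠ j) (hak : a ≠ k) (hjk : j ≠ k) (Q : G.Walk a j) {P : G.Walk a k}
    (hP : P.IsTrail) :
    ∃ e ∈ Q.edges, e ∉ P.edges ∧ ∀ ⦃u v : V⦄ (R : G.Walk u v), R.IsTrail →
      G.degree u = 1 → G.degree v = 1 → e ∈ R.edges → ∃ f ∈ R.edges, f ∈ P.edges := by
  have hleave : ∃ e ∈ Q.edges, e ∉ P.edges := by
    refine ⟨_, Q.mk_penultimate_end_mem_edges (Walk.not_nil_of_ne haj), fun hjP => ?_⟩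
    have := hP.two_le_degree_of_mem_support (P.snd_mem_support_of_mem_edges hjP) haj.symm hjk
    omega
  obtain ⟨e, heQ, heP, x, hxe, e', he'P, hxe'⟩ := Q.exists_exit_edge (· ∈ P.edges)
    (P.mk_start_snd_mem_edges (Walk.not_nil_of_ne hak)) (Sym2.mem_mk_left _ _) hleave
  have hx : 2 ≤ G.degree x :=
    two_le_degree_of_mem_incidenceSet ⟨Q.edges_subset_edgeSet heQ, hxe⟩
      ⟨P.edges_subset_edgeSet he'P, hxe'⟩ (by rintro rfl; exact heP he'P)
  refine ⟨e, heQ, heP, fun u v R hR hu hv heR => ?_⟩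
  exact exists_common_edge_of_degree_le_three (hdeg x) hP (Walk.mem_support_of_mem_edges he'P hxe')
    (by rintro rfl; omega) (by rintro rfl; omega) hR (Walk.mem_support_of_mem_edges heR hxe)
    (by rintro rfl; omega) (by rintro rfl; omega)

def Separates (G : SimpleGraph V) (e : Sym2 V) (x y : V) : Prop :=
  ¬ (G.deleteEdges {e}).Reachable x y

lemma separates_comm {e : Sym2 V} {x y : V} : G.Separates e x y ↔ G.Separates e y x :=
  not_congr reachable_comm

lemma IsAcyclic.mem_edges_iff_separates (hG : G.IsAcyclic) {x y : V} {w : G.Walk x y}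
    (hw : w.IsPath) {e : Sym2 V} : e ∈ w.edges ↔ G.Separates e x y := by
  classical
  refine ⟨fun he ⟨p⟩ => ?_, w.mem_edges_of_not_reachable_deleteEdges⟩
  have hsub : ∀ f ∈ p.edges, f ∈ G.edgeSet := fun f hf =>
    (edgeSet_deleteEdges _ ▸ p.edges_subset_edgeSet hf).1
  have hpath : (p.transfer G hsub).toPath = ⟨w, hw⟩ := (hG.subsingleton_path x y).elim _ _
  have hep : e ∈ p.edges := by
    rw [← p.edges_transfer hsub]
    exact (p.transfer G hsub).edges_toPath_subset_edges (hpath ▸ he)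
  exact (edgeSet_deleteEdges _ ▸ p.edges_subset_edgeSet hep).2 rfl

lemma Preconnected.reachable_deleteEdges_or (hG : G.Preconnected) (u v x : V) :
    (G.deleteEdges {s(u, v)}).Reachable x u ∨ (G.deleteEdges {s(u, v)}).Reachable x v := by
  obtain ⟨p⟩ := hG x u
  induction p with
  | nil => exact Or.inl .rfl
  | @cons x y u hxy p ih =>
    by_cases he : s(x, y) = s(u, v)
    · rcases Sym2.eq_iff.mp he with ⟨h, -⟩ | ⟨h, -⟩
      exacts [Or.inl (h ▸ .rfl), Or.inr (h ▸ .rfl)]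
    · have hadj : (G.deleteEdges {s(u, v)}).Adj x y := by simp [hxy, he]
      exact ih.imp hadj.reachable.trans hadj.reachable.trans

lemma Preconnected.separates_iff (hG : G.Preconnected) (u v x y : V) :
    G.Separates s(u, v) x y ↔ ¬ ((G.deleteEdges {s(u, v)}).Reachable x u ↔
      (G.deleteEdges {s(u, v)}).Reachable y u) := by
  refine ⟨fun hsep hiff => hsep ?_, fun hiff hxy => hiff ⟨hxy.symm.trans, hxy.trans⟩⟩
  by_cases hxu : (G.deleteEdges {s(u, v)}).Reachable x u
  · exact hxu.trans (hiff.mp hxu).symm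
  · have hyu : ¬ (G.deleteEdges {s(u, v)}).Reachable y u := mt hiff.mpr hxu
    exact ((hG.reachable_deleteEdges_or u v x).resolve_left hxu).trans
      ((hG.reachable_deleteEdges_or u v y).resolve_left hyu).symm

end SimpleGraph

namespace IsMatchingOf

variable {n : ℕ} {B : Finset (Fin n)} {μ ν : Finset (Fin n × Fin n)}

lemma biUnion_eq (hμ : IsMatchingOf B μ) : μ.biUnion (fun q => {q.1, q.2}) = B := by
  ext b
  simp only [mem_biUnion, mem_insert, mem_singleton]
  constructor
  · rintro ⟨q, hq, rfl | rfl⟩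
    exacts [(hμ.1 q hq).2.1, (hμ.1 q hq).2.2]
  · intro hb
    obtain ⟨q, ⟨hq, hbq⟩, -⟩ := hμ.2 b hb
    exact ⟨q, hq, hbq⟩

lemma pairwiseDisjoint (hμ : IsMatchingOf B μ) :
    (μ : Set (Fin n × Fin n)).PairwiseDisjoint (fun q => ({q.1, q.2} : Finset (Fin n))) := by
  intro q hq q' hq' hne
  refine disjoint_left.2 fun b hb hb' => hne ?_
  simp only [mem_insert, mem_singleton] at hb hb'
  have hbB : b ∈ B := by rcases hb with rfl | rfl; exacts [(hμ.1 q hq).2.1, (hμ.1 q hq).2.2]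
  exact (hμ.2 b hbB).unique ⟨hq, hb⟩ ⟨hq', hb'⟩

lemma sum_add (hμ : IsMatchingOf B μ) {M : Type*} [AddCommMonoid M] (g : Fin n → M) :
    ∑ q ∈ μ, (g q.1 + g q.2) = ∑ b ∈ B, g b := by
  rw [← hμ.biUnion_eq, sum_biUnion hμ.pairwiseDisjoint]
  exact sum_congr rfl fun q hq => (sum_pair (hμ.1 q hq).1.ne).symm

lemma card_filter_not_iff (hμ : IsMatchingOf B μ) (f : Fin n → Prop) [DecidablePred f] :
    (#{q ∈ μ | ¬ (f q.1 ↔ f q.2)} : ZMod 2) = #{b ∈ B | f b} := by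
  rw [natCast_card_filter, natCast_card_filter, ← hμ.sum_add]
  refine sum_congr rfl fun q _ => ?_
  by_cases h₁ : f q.1 <;> by_cases h₂ : f q.2 <;> simp [h₁, h₂]
  rfl

lemma eq_of_subset_s19 (hν : IsMatchingOf B ν) (hμ : IsMatchingOf B μ) (hsub : ν ⊆ μ) : ν = μ := by
  refine subset_antisymm hsub fun q hq => ?_
  have hqB := (hμ.1 q hq).2.1
  obtain ⟨r, ⟨hr, hqr⟩, -⟩ := hν.2 q.1 hqB
  obtain rfl := (hμ.2 q.1 hqB).unique ⟨hsub hr, hqr⟩ ⟨hq, Or.inl rfl⟩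
  exact hr

lemma exists_partner (hμ : IsMatchingOf B μ) {q : Fin n × Fin n} (hq : q.1 < q.2) (hqB : q.1 ∈ B)
    (hqμ : q ∉ μ) : ∃ r ∈ μ, ∃ k, q.1 ≠ k ∧ q.2 ≠ k ∧ (r = (q.1, k) ∨ r = (k, q.1)) := by
  obtain ⟨r, ⟨hr, hqr⟩, -⟩ := hμ.2 q.1 hqB
  have hr12 := (hμ.1 r hr).1
  rcases hqr with h | h
  · refine ⟨r, hr, r.2, h ▸ hr12.ne, fun h' => hqμ ?_, Or.inl (by rw [h])⟩
    rwa [show q = r from Prod.ext h h']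
  · exact ⟨r, hr, r.1, h ▸ hr12.ne', fun h' => by omega, Or.inr (by rw [h])⟩

end IsMatchingOf

section CrossingCount

open SimpleGraph

variable {V : Type*} {G : SimpleGraph V} {n : ℕ} {leaf : Fin n → V} {B : Finset (Fin n)}
  {μ ν : Finset (Fin n × Fin n)}

open Classical in
/-- In a tree, the number of pairs of `μ` whose connecting path runs through the edge `e`
(see `SimpleGraph.IsAcyclic.mem_edges_iff_separates`). -/
noncomputable def crossingCount (G : SimpleGraph V) (leaf : Fin n → V)
    (μ : Finset (Fin n × Fin n)) (e : Sym2 V) : ℕ :=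
  #{q ∈ μ | G.Separates e (leaf q.1) (leaf q.2)}

open Classical in
lemma SimpleGraph.IsAcyclic.sum_map_edges_eq [Fintype G.edgeSet] (hG : G.IsAcyclic) {x y : V}
    {w : G.Walk x y} (hw : w.IsPath) (ℓ : Sym2 V → ℝ) :
    (w.edges.map ℓ).sum = ∑ e ∈ G.edgeFinset, if G.Separates e x y then ℓ e else 0 := by
  rw [← sum_filter, ← List.sum_toFinset ℓ hw.isTrail.edges_nodup]
  congr 1
  ext e
  rw [List.mem_toFinset, mem_filter, mem_edgeFinset, hG.mem_edges_iff_separates hw]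
  exact ⟨fun h => ⟨w.edges_subset_edgeSet ((hG.mem_edges_iff_separates hw).2 h), h⟩, And.right⟩

theorem sum_eq_sum_crossingCount [Fintype G.edgeSet] (hT : G.IsTree) {ℓ : Sym2 V → ℝ}
    {D : Fin n → Fin n → ℝ}
    (hD : ∀ (i j : Fin n) (P : G.Path (leaf i) (leaf j)), D i j = (P.1.edges.map ℓ).sum)
    (μ : Finset (Fin n × Fin n)) :
    ∑ q ∈ μ, D q.1 q.2 = ∑ e ∈ G.edgeFinset, crossingCount G leaf μ e * ℓ e := by
  classical
  have hDq (q : Fin n × Fin n) : D q.1 q.2 =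
      ∑ e ∈ G.edgeFinset, if G.Separates e (leaf q.1) (leaf q.2) then ℓ e else 0 := by
    obtain ⟨P, hP⟩ := hT.connected.preconnected.exists_isPath (leaf q.1) (leaf q.2)
    rw [hD _ _ ⟨P, hP⟩, hT.isAcyclic.sum_map_edges_eq hP]
  rw [sum_congr rfl fun q _ => hDq q, sum_comm]
  refine sum_congr rfl fun e _ => ?_
  rw [← sum_filter, sum_const, nsmul_eq_mul, crossingCount]

lemma PathsEdgeDisjoint.not_separates (hdisj : PathsEdgeDisjoint G leaf μ) (hT : G.IsTree)
    {q q' : Fin n × Fin n} (hq : q ∈ μ) (hq' : q' ∈ μ) (hne : q ≠ q') {e : Sym2 V}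
    (he : G.Separates e (leaf q.1) (leaf q.2)) : ¬ G.Separates e (leaf q'.1) (leaf q'.2) := by
  intro he'
  have hsep := @hT.isAcyclic.mem_edges_iff_separates
  obtain ⟨P, hP⟩ := hT.connected.preconnected.exists_isPath (leaf q.1) (leaf q.2)
  obtain ⟨P', hP'⟩ := hT.connected.preconnected.exists_isPath (leaf q'.1) (leaf q'.2)
  exact hdisj q hq q' hq' hne ⟨P, hP⟩ ⟨P', hP'⟩ e ((hsep hP).2 he) ((hsep hP').2 he')

lemma crossingCount_le_one (hdisj : PathsEdgeDisjoint G leaf μ) (hT : G.IsTree) (e : Sym2 V) :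
    crossingCount G leaf μ e ≤ 1 := by
  classical
  refine card_le_one.2 fun q hq q' hq' => by_contra fun hne => ?_
  rw [mem_filter] at hq hq'
  exact hdisj.not_separates hT hq.1 hq'.1 hne hq.2 hq'.2

lemma crossingCount_cast_eq (hG : G.Preconnected) (e : Sym2 V) (hμ : IsMatchingOf B μ)
    (hν : IsMatchingOf B ν) :
    (crossingCount G leaf μ e : ZMod 2) = crossingCount G leaf ν e := by
  classical
  induction e using Sym2.ind with | h u v => ?_
  have hside (m : Finset (Fin n × Fin n)) (hm : IsMatchingOf B m) :
      (crossingCount G leaf m s(u, v) : ZMod 2) =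
        #{b ∈ B | (G.deleteEdges {s(u, v)}).Reachable (leaf b) u} := by
    rw [← hm.card_filter_not_iff, crossingCount]
    simp only [hG.separates_iff]
  rw [hside μ hμ, hside ν hν]

lemma crossingCount_le_crossingCount (hT : G.IsTree) (hμ : IsMatchingOf B μ)
    (hdisj : PathsEdgeDisjoint G leaf μ) (hν : IsMatchingOf B ν) (e : Sym2 V) :
    crossingCount G leaf μ e ≤ crossingCount G leaf ν e := by
  have hle := crossingCount_le_one hdisj hT e
  have hmod := (ZMod.natCast_eq_natCast_iff' _ _ 2).1
    (crossingCount_cast_eq (leaf := leaf) hT.connected.preconnected e hμ hν)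
  omega

theorem subset_of_crossingCount_le [Fintype V] [DecidableRel G.Adj] (hT : G.IsTree)
    (hdeg : ∀ v, G.degree v ≤ 3) (hleaf : ∀ i, G.degree (leaf i) = 1)
    (hinj : Function.Injective leaf) (hμ : IsMatchingOf B μ) (hdisj : PathsEdgeDisjoint G leaf μ)
    (hν : IsMatchingOf B ν)
    (hle : ∀ e ∈ G.edgeSet, crossingCount G leaf ν e ≤ crossingCount G leaf μ e) : ν ⊆ μ := by
  intro q hqν
  by_contra hqμ
  have hpath := hT.connected.preconnected.exists_isPath
  have hsep := @hT.isAcyclic.mem_edges_iff_separates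
  obtain ⟨hq, hqB, -⟩ := hν.1 q hqν
  obtain ⟨r, hrμ, k, hak, hjk, hr⟩ := hμ.exists_partner hq hqB hqμ
  have hrk (e : Sym2 V) :
      G.Separates e (leaf r.1) (leaf r.2) ↔ G.Separates e (leaf q.1) (leaf k) := by
    rcases hr with rfl | rfl
    exacts [Iff.rfl, separates_comm]
  obtain ⟨Q, hQ⟩ := hpath (leaf q.1) (leaf q.2)
  obtain ⟨P, hP⟩ := hpath (leaf q.1) (leaf k)
  obtain ⟨e, heQ, heP, hforce⟩ := exists_edge_forcing_overlap hdeg (hleaf _) (hleaf _) (hleaf _)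
    (hinj.ne hq.ne) (hinj.ne hak) (hinj.ne hjk) Q hP.isTrail
  obtain ⟨r', hr'μ, hr'e⟩ : ∃ r' ∈ μ, G.Separates e (leaf r'.1) (leaf r'.2) := by
    classical
    have hpos : 0 < crossingCount G leaf ν e :=
      card_pos.2 ⟨q, mem_filter.2 ⟨hqν, (hsep hQ).1 heQ⟩⟩
    obtain ⟨r', hr'⟩ := card_pos.1 (hpos.trans_le (hle e (Q.edges_subset_edgeSet heQ)))
    exact ⟨r', mem_filter.1 hr'⟩
  obtain ⟨R, hR⟩ := hpath (leaf r'.1) (leaf r'.2)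
  obtain ⟨f, hfR, hfP⟩ := hforce R hR.isTrail (hleaf _) (hleaf _) ((hsep hR).2 hr'e)
  obtain rfl : r' = r := by
    by_contra hne
    exact hdisj.not_separates hT hr'μ hrμ hne ((hsep hR).1 hfR) ((hrk f).2 ((hsep hP).1 hfP))
  exact heP ((hsep hP).2 ((hrk e).1 hr'e))

end CrossingCount

theorem stmt19_general {V : Type*} [Fintype V] (G : SimpleGraph V)
    [DecidableRel G.Adj] (hT : G.IsTree)
    (hdeg : ∀ v : V, G.degree v = 1 ∨ G.degree v = 3)
    (n : ℕ) (leaf : Fin n → V) (hleaf1 : ∀ i, G.degree (leaf i) = 1)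
    (hinj : Function.Injective leaf)
    (ℓ : Sym2 V → ℝ) (hℓ : ∀ e ∈ G.edgeSet, 0 < ℓ e)
    (D : Fin n → Fin n → ℝ)
    (hD : ∀ (i j : Fin n) (P : G.Path (leaf i) (leaf j)), D i j = (P.1.edges.map ℓ).sum)
    (B : Finset (Fin n))
    (μ : Finset (Fin n × Fin n)) (hμ : IsMatchingOf B μ)
    (hdisj : PathsEdgeDisjoint G leaf μ) :
    ∀ ν : Finset (Fin n × Fin n), IsMatchingOf B ν → ν ≠ μ →
      (∑ q ∈ μ, D q.1 q.2) < ∑ q ∈ ν, D q.1 q.2 := by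
  classical
  intro ν hν hne
  have hdeg3 (v : V) : G.degree v ≤ 3 := by rcases hdeg v with h | h <;> omega
  obtain ⟨e₀, he₀, hlt⟩ :
      ∃ e ∈ G.edgeFinset, crossingCount G leaf μ e < crossingCount G leaf ν e := by
    by_contra! hge
    exact hne (hν.eq_of_subset_s19 hμ (subset_of_crossingCount_le hT hdeg3 hleaf1 hinj hμ hdisj hν
      fun e he => hge e (SimpleGraph.mem_edgeFinset.2 he)))
  rw [sum_eq_sum_crossingCount hT hD, sum_eq_sum_crossingCount hT hD]
  refine sum_lt_sum (fun e he => ?_) ⟨e₀, he₀, ?_⟩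
  · have := (hℓ e (SimpleGraph.mem_edgeFinset.1 he)).le
    gcongr
    exact crossingCount_le_crossingCount hT hμ hdisj hν e
  · have := hℓ e₀ (SimpleGraph.mem_edgeFinset.1 he₀)
    gcongr

/-- in a finite trivalent tree with positively weighted edges and leaves
labelled by `[n]`, the matching `μ` of an even leaf subset `B` whose connecting paths are
pairwise edge-disjoint is the unique minimizer of the total path-length
`Σ_{(i,j) ∈ μ} d(i,j)` among all perfect matchings of `B`: any other matching `ν` has
strictly larger total length.  Here `D i j` denotes the length (sum of the edge weights `ℓ`)
of the (unique) path in the tree between the leaves `i` and `j`. -/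
theorem stmt19 {V : Type*} [Fintype V] [DecidableEq V] (G : SimpleGraph V)
    [DecidableRel G.Adj] (hT : G.IsTree)
    (hdeg : ∀ v : V, G.degree v = 1 ∨ G.degree v = 3)
    (n : ℕ) (leaf : Fin n → V) (hleaf1 : ∀ i, G.degree (leaf i) = 1)
    (hinj : Function.Injective leaf)
    (hsurj : ∀ v : V, G.degree v = 1 → ∃ i, leaf i = v)
    (ℓ : Sym2 V → ℝ) (hℓ : ∀ e ∈ G.edgeSet, 0 < ℓ e)
    (D : Fin n → Fin n → ℝ)
    (hD : ∀ (i j : Fin n) (P : G.Path (leaf i) (leaf j)), D i j = (P.1.edges.map ℓ).sum)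
    (B : Finset (Fin n)) (hB : Even B.card)
    (μ : Finset (Fin n × Fin n)) (hμ : IsMatchingOf B μ)
    (hdisj : PathsEdgeDisjoint G leaf μ) :
    ∀ ν : Finset (Fin n × Fin n), IsMatchingOf B ν → ν ≠ μ →
      (∑ q ∈ μ, D q.1 q.2) < ∑ q ∈ ν, D q.1 q.2 :=
  stmt19_general G hT hdeg n leaf hleaf1 hinj ℓ hℓ D hD B μ hμ hdisj
end
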